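/- arXiv:1811.10846 — 8 statements merged into one kernel-verified Lean document; each statement's English description precedes it below -/
import Mathlib

section
/- Fix positive integers l_i and positive reals λ_i for n < i ≤ m, and let p = (p_{n+1},...,p_m) with 0 ≤ p_i ≤ 2l_i and Σ_i p_i ≡ 0 (mod 3). Then Σ_{(j,k): j_i + k_i = p_i, Σj_i ≡ 0, Σk_i ≡ 0 (mod 3)} ∏_i C(l_i, j_i)·C(l_i, k_i) + 2·Σ_{(j,k): j_i + k_i = p_i, Σj_i ≡ 1, Σk_i ≡ 2 (mod 3)} ∏_i C(l_i, j_i)·C(l_i, k_i) = ∏_i C(2l_i, p_i), where sums run over tuples with 0 ≤ j_i, k_i ≤ l_i. -/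
open Finset

/-
Split the unrestricted sum over all pairs (j, k) with j_i + k_i = p_i according to
the residues of Σ j_i and Σ k_i mod 3. Since Σ j_i + Σ k_i = Σ p_i ≡ 0, only the residue pairs
(0,0), (1,2), (2,1) occur, and swapping j and k shows that the last two contribute equally.
The unrestricted sum factors over the coordinates, and each factor is the Vandermonde
identity Σ_{a+b=q} C(l,a) C(l,b) = C(2l,q).
-/

theorem sum_range_sum_range_ite_add_eq_choose_two_mul (l q : ℕ) :
    (∑ a ∈ range (l + 1), ∑ b ∈ range (l + 1),
      if a + b = q then l.choose a * l.choose b else 0) = (2 * l).choose q := by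
  rw [two_mul, Nat.add_choose_eq, ← sum_product', ← sum_filter]
  refine sum_subset (fun x hx => ?_) (fun x hx hx' => ?_)
  · simp only [mem_filter, mem_product, mem_range] at hx
    simpa using hx.2
  · rw [HasAntidiagonal.mem_antidiagonal] at hx
    simp only [mem_filter, mem_product, mem_range, not_and] at hx'
    by_cases h1 : x.1 < l + 1
    · have h2 : ¬ x.2 < l + 1 := fun h2 => hx' ⟨h1, h2⟩ hx
      exact mul_eq_zero_of_right _ (Nat.choose_eq_zero_of_lt (by omega))
    · exact mul_eq_zero_of_left (Nat.choose_eq_zero_of_lt (by omega)) _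

theorem sum_pi_sum_pi_prod_attach {ι R : Type*} {κ : ι → Type*} [DecidableEq ι]
    [CommSemiring R] (s : Finset ι) (t : ∀ i, Finset (κ i)) (f : ∀ i, κ i → κ i → R) :
    ∑ j ∈ s.pi t, ∑ k ∈ s.pi t, ∏ x ∈ s.attach, f x.1 (j x.1 x.2) (k x.1 x.2) =
      ∏ i ∈ s, ∑ a ∈ t i, ∑ b ∈ t i, f i a b := by
  rw [prod_sum]
  refine sum_congr rfl fun j _ => ?_
  -- `g` extends `(i, b) ↦ f i (j i) b` by `0` off `s`, so that `prod_sum` applies once more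
  let g : ∀ i, κ i → R := fun i b => if h : i ∈ s then f i (j i h) b else 0
  calc ∑ k ∈ s.pi t, ∏ x ∈ s.attach, f x.1 (j x.1 x.2) (k x.1 x.2)
      = ∑ k ∈ s.pi t, ∏ x ∈ s.attach, g x.1 (k x.1 x.2) := by
        simp only [g, dif_pos (Subtype.prop _)]
    _ = ∏ i ∈ s, ∑ b ∈ t i, g i b := (prod_sum s t g).symm
    _ = ∏ x ∈ s.attach, ∑ b ∈ t x.1, f x.1 (j x.1 x.2) b := by
        rw [← prod_attach s]
        simp only [g, dif_pos (Subtype.prop _)]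

theorem sum_pi_sum_pi_ite_prod_choose_mul_choose (s : Finset ℕ) (l p : ℕ → ℕ) :
    (∑ j ∈ s.pi (fun i => range (l i + 1)), ∑ k ∈ s.pi (fun i => range (l i + 1)),
      if ∀ i (hi : i ∈ s), j i hi + k i hi = p i then
        ∏ x ∈ s.attach, (l x.1).choose (j x.1 x.2) * (l x.1).choose (k x.1 x.2)
      else 0) = ∏ i ∈ s, (2 * l i).choose (p i) := by
  have hfactor : ∀ j k : ∀ i ∈ s, ℕ,
      (if ∀ i (hi : i ∈ s), j i hi + k i hi = p i then
        ∏ x ∈ s.attach, (l x.1).choose (j x.1 x.2) * (l x.1).choose (k x.1 x.2) else 0) =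
      ∏ x ∈ s.attach, if j x.1 x.2 + k x.1 x.2 = p x.1 then
        (l x.1).choose (j x.1 x.2) * (l x.1).choose (k x.1 x.2) else 0 := by
    intro j k
    rw [prod_ite_zero]
    simp only [mem_attach, forall_const, Subtype.forall]
  simp only [hfactor, sum_pi_sum_pi_prod_attach s (fun i => range (l i + 1))
    (fun i a b => if a + b = p i then (l i).choose a * (l i).choose b else 0),
    sum_range_sum_range_ite_add_eq_choose_two_mul]

section ResiduePairs

variable {α M : Type*} [AddCommMonoid M] (A : Finset α) (C : α → α → Prop) [DecidableRel C]
  (w : α → α → M) (σ : α → ℕ)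

def residuePairSum (a b : ℕ) : M :=
  ∑ j ∈ A, ∑ k ∈ A, if C j k ∧ σ j % 3 = a ∧ σ k % 3 = b then w j k else 0

variable {A C w σ}

theorem residuePairSum_comm (hC : ∀ j k, C j k → C k j) (hw : ∀ j k, w j k = w k j)
    (a b : ℕ) : residuePairSum A C w σ a b = residuePairSum A C w σ b a := by
  unfold residuePairSum
  rw [sum_comm]
  refine sum_congr rfl fun j _ => sum_congr rfl fun k _ => ?_
  have hiff : (C k j ∧ σ k % 3 = a ∧ σ j % 3 = b) ↔ (C j k ∧ σ j % 3 = b ∧ σ k % 3 = a) :=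
    ⟨fun ⟨h, ha, hb⟩ => ⟨hC k j h, hb, ha⟩, fun ⟨h, hb, ha⟩ => ⟨hC j k h, ha, hb⟩⟩
  rw [if_congr hiff (hw k j) rfl]

theorem sum_sum_ite_eq_residuePairSum (hC : ∀ j k, C j k → (σ j + σ k) % 3 = 0) :
    (∑ j ∈ A, ∑ k ∈ A, if C j k then w j k else 0) =
      residuePairSum A C w σ 0 0 + residuePairSum A C w σ 1 2 +
        residuePairSum A C w σ 2 1 := by
  simp only [residuePairSum, ← sum_add_distrib]
  refine sum_congr rfl fun j _ => sum_congr rfl fun k _ => ?_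
  by_cases h : C j k
  · have hres := hC j k h
    have hcases : σ j % 3 = 0 ∧ σ k % 3 = 0 ∨ σ j % 3 = 1 ∧ σ k % 3 = 2 ∨
        σ j % 3 = 2 ∧ σ k % 3 = 1 := by omega
    rcases hcases with ⟨hj, hk⟩ | ⟨hj, hk⟩ | ⟨hj, hk⟩ <;> simp [h, hj, hk]
  · simp [h]

theorem residuePairSum_zero_zero_add_two_nsmul (hCσ : ∀ j k, C j k → (σ j + σ k) % 3 = 0)
    (hC : ∀ j k, C j k → C k j) (hw : ∀ j k, w j k = w k j) :
    residuePairSum A C w σ 0 0 + 2 • residuePairSum A C w σ 1 2 =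
      ∑ j ∈ A, ∑ k ∈ A, if C j k then w j k else 0 := by
  rw [sum_sum_ite_eq_residuePairSum hCσ, residuePairSum_comm hC hw 2 1, two_nsmul, add_assoc]

end ResiduePairs

open Classical in
theorem filtered_vandermonde_identity_general
    (s : Finset ℕ) (l p : ℕ → ℕ)
    (hp3 : (∑ i ∈ s, p i) % 3 = 0) :
    (∑ j ∈ s.pi (fun i => Finset.range (l i + 1)),
      ∑ k ∈ s.pi (fun i => Finset.range (l i + 1)),
        if (∀ i (hi : i ∈ s), j i hi + k i hi = p i) ∧
            (∑ i ∈ s.attach, j i.1 i.2) % 3 = 0 ∧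
            (∑ i ∈ s.attach, k i.1 i.2) % 3 = 0 then
          ∏ i ∈ s.attach, (l i.1).choose (j i.1 i.2) * (l i.1).choose (k i.1 i.2)
        else 0)
    + 2 * (∑ j ∈ s.pi (fun i => Finset.range (l i + 1)),
      ∑ k ∈ s.pi (fun i => Finset.range (l i + 1)),
        if (∀ i (hi : i ∈ s), j i hi + k i hi = p i) ∧
            (∑ i ∈ s.attach, j i.1 i.2) % 3 = 1 ∧
            (∑ i ∈ s.attach, k i.1 i.2) % 3 = 2 then
          ∏ i ∈ s.attach, (l i.1).choose (j i.1 i.2) * (l i.1).choose (k i.1 i.2)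
        else 0)
    = ∏ i ∈ s, (2 * l i).choose (p i) := by
  have hsum : ∀ j k : ∀ i ∈ s, ℕ, (∀ i (hi : i ∈ s), j i hi + k i hi = p i) →
      ((∑ x ∈ s.attach, j x.1 x.2) + ∑ x ∈ s.attach, k x.1 x.2) % 3 = 0 := by
    intro j k h
    rw [← sum_add_distrib, sum_congr rfl fun x _ => h x.1 x.2, sum_attach s p, hp3]
  have hswap : ∀ j k : ∀ i ∈ s, ℕ, (∀ i (hi : i ∈ s), j i hi + k i hi = p i) →
      ∀ i (hi : i ∈ s), k i hi + j i hi = p i :=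
    fun j k h i hi => (add_comm _ _).trans (h i hi)
  rw [← sum_pi_sum_pi_ite_prod_choose_mul_choose s l p]
  exact residuePairSum_zero_zero_add_two_nsmul hsum hswap
    fun j k => prod_congr rfl fun _ _ => mul_comm _ _

open Classical in
theorem filtered_vandermonde_identity
    (s : Finset ℕ) (l p : ℕ → ℕ)
    (hl : ∀ i ∈ s, 1 ≤ l i)
    (hp : ∀ i ∈ s, p i ≤ 2 * l i)
    (hp3 : (∑ i ∈ s, p i) % 3 = 0) :
    (∑ j ∈ s.pi (fun i => Finset.range (l i + 1)),
      ∑ k ∈ s.pi (fun i => Finset.range (l i + 1)),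
        if (∀ i (hi : i ∈ s), j i hi + k i hi = p i) ∧
            (∑ i ∈ s.attach, j i.1 i.2) % 3 = 0 ∧
            (∑ i ∈ s.attach, k i.1 i.2) % 3 = 0 then
          ∏ i ∈ s.attach, (l i.1).choose (j i.1 i.2) * (l i.1).choose (k i.1 i.2)
        else 0)
    + 2 * (∑ j ∈ s.pi (fun i => Finset.range (l i + 1)),
      ∑ k ∈ s.pi (fun i => Finset.range (l i + 1)),
        if (∀ i (hi : i ∈ s), j i hi + k i hi = p i) ∧
            (∑ i ∈ s.attach, j i.1 i.2) % 3 = 1 ∧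
            (∑ i ∈ s.attach, k i.1 i.2) % 3 = 2 then
          ∏ i ∈ s.attach, (l i.1).choose (j i.1 i.2) * (l i.1).choose (k i.1 i.2)
        else 0)
    = ∏ i ∈ s, (2 * l i).choose (p i) :=
  filtered_vandermonde_identity_general s l p hp3
end

section
/- With Z, μ, A_n as above: for μ×μ-almost every (z,w) ∈ Z×Z there exist infinitely many N such that Σ_{i=0}^{N} (z_i − w_i) ≡ 0 (mod k). -/
open MeasureTheory Finset

/-- Digit bounds: coordinate `0` ranges over `{0,…,k-1}`, the others over `{0,…,k}`. -/
def digitBound (k : ℕ) : ℕ → ℕ := fun n => if n = 0 then k else k + 1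

theorem ae_infinitely_many_partial_sums_divisible (k : ℕ) (hk : 2 ≤ k)
    (μ : Measure (ℕ → ℕ)) [IsProbabilityMeasure μ]
    (hcyl : ∀ s : Finset ℕ, ∀ a : ℕ → ℕ,
      μ {z | ∀ n ∈ s, z n = a n}
        = ∏ n ∈ s, (if a n < digitBound k n then (1 : ENNReal) / digitBound k n else 0)) :
    ∀ᵐ p ∂(μ.prod μ),
      {N : ℕ | (∑ i ∈ Finset.range (N + 1), ((p.1 i : ℤ) - (p.2 i : ℤ))) % k = 0}.Infinite := by
  have hk0 : 0 < k := by omega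
  set blk : ℕ → Finset ℕ := fun n => (Finset.Icc 1 k).image (fun i => k * n + i) with hblk
  set B : ℕ → Set (ℕ → ℕ) := fun n => {z | ∀ m ∈ blk n, z m = 1} with hBdef
  set C : ℕ → Set (ℕ → ℕ) := fun n => {z | ∀ m ∈ blk n, z m = 0} with hCdef
  set A : ℕ → Set ((ℕ → ℕ) × (ℕ → ℕ)) := fun n => (B n) ×ˢ (C n) with hAdef
  set q : ENNReal := ((1 : ENNReal) / (k + 1)) ^ k with hq
  -- measure of constant cylinder sets
  have hcyl' : ∀ (T : Finset ℕ) (c : ℕ), (∀ m ∈ T, m ≠ 0) → c < k + 1 →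
      μ {z | ∀ m ∈ T, z m = c} = ((1 : ENNReal) / (k + 1)) ^ T.card := by
    intro T c h0 hc
    rw [hcyl T (fun _ => c)]
    rw [Finset.prod_congr rfl (fun m hm => show
        (if (fun _ => c) m < digitBound k m then (1 : ENNReal) / digitBound k m else 0)
          = (1 : ENNReal) / (k + 1) from by
        simp [digitBound, h0 m hm, hc])]
    simp
  -- basic facts about the blocks
  have hblk_ne : ∀ n, ∀ m ∈ blk n, m ≠ 0 := by
    intro n m hm
    simp only [hblk, Finset.mem_image, Finset.mem_Icc] at hm
    obtain ⟨i, ⟨hi1, _⟩, rfl⟩ := hm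
    omega
  have hblk_card : ∀ n, (blk n).card = k := by
    intro n
    rw [hblk]
    rw [Finset.card_image_of_injective _ (fun a b hab => by omega)]
    simp [Nat.card_Icc]
  have hdisj : ∀ m n : ℕ, m ≠ n → Disjoint (blk m) (blk n) := by
    intro m n hmn
    rw [Finset.disjoint_left]
    rintro x hx hx'
    simp only [hblk, Finset.mem_image, Finset.mem_Icc] at hx hx'
    obtain ⟨i, ⟨hi1, hi2⟩, rfl⟩ := hx
    obtain ⟨j, ⟨hj1, hj2⟩, hj⟩ := hx'
    rcases Nat.lt_or_ge m n with h | h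
    · have h1 : k * (m + 1) ≤ k * n := Nat.mul_le_mul_left k h
      rw [Nat.mul_succ] at h1
      omega
    · have h' : n < m := by omega
      have h1 : k * (n + 1) ≤ k * m := Nat.mul_le_mul_left k h'
      rw [Nat.mul_succ] at h1
      omega
  -- intersections of the basic cylinder sets are cylinder sets
  have hInter : ∀ (S : Finset ℕ) (c : ℕ),
      (⋂ n ∈ S, {z : ℕ → ℕ | ∀ m ∈ blk n, z m = c})
        = {z : ℕ → ℕ | ∀ m ∈ S.biUnion blk, z m = c} := by
    intro S c
    ext z
    simp only [Set.mem_iInter, Set.mem_setOf_eq, Finset.mem_biUnion]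
    constructor
    · rintro h m ⟨n, hn, hm⟩
      exact h n hn m hm
    · intro h n hn m hm
      exact h m ⟨n, hn, hm⟩
  have hcard : ∀ S : Finset ℕ, (S.biUnion blk).card = S.card * k := by
    intro S
    rw [Finset.card_biUnion (fun m _ n _ hmn => hdisj m n hmn)]
    simp [hblk_card, Finset.sum_const, Nat.mul_comm]
  have hmeasInter : ∀ (S : Finset ℕ) (c : ℕ), c < k + 1 →
      μ (⋂ n ∈ S, {z : ℕ → ℕ | ∀ m ∈ blk n, z m = c}) = q ^ S.card := by
    intro S c hc
    rw [hInter S c, hcyl' _ c (fun m hm => by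
      obtain ⟨n, _, hmn⟩ := Finset.mem_biUnion.1 hm
      exact hblk_ne n m hmn) hc, hcard S, hq, ← pow_mul, Nat.mul_comm]
  -- measurability
  have hmcyl : ∀ (n c : ℕ), MeasurableSet {z : ℕ → ℕ | ∀ m ∈ blk n, z m = c} := by
    intro n c
    have : {z : ℕ → ℕ | ∀ m ∈ blk n, z m = c}
        = ⋂ m ∈ blk n, (fun z : ℕ → ℕ => z m) ⁻¹' {c} := by
      ext z; simp
    rw [this]
    exact MeasurableSet.biInter (Set.to_countable _)
      (fun m _ => measurable_pi_apply m (measurableSet_singleton c))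
  have hmA : ∀ n, MeasurableSet (A n) := fun n =>
    (hmcyl n 1).prod (hmcyl n 0)
  -- measure of intersections of the A's
  have hAinter : ∀ S : Finset ℕ,
      (μ.prod μ) (⋂ n ∈ S, A n) = (q * q) ^ S.card := by
    intro S
    have h1 : (⋂ n ∈ S, A n) = (⋂ n ∈ S, B n) ×ˢ (⋂ n ∈ S, C n) := by
      ext p
      simp only [hAdef, Set.mem_iInter, Set.mem_prod, forall_and]
    rw [h1, Measure.prod_prod, hmeasInter S 1 (by omega), hmeasInter S 0 (by omega),
      ← mul_pow]
  have hAn : ∀ n, (μ.prod μ) (A n) = q * q := by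
    intro n
    have := hAinter {n}
    simpa using this
  -- independence
  have hindep : ProbabilityTheory.iIndepSet A (μ.prod μ) := by
    rw [ProbabilityTheory.iIndepSet_iff_meas_biInter hmA]
    intro S
    rw [hAinter S, Finset.prod_congr rfl (fun n _ => hAn n), Finset.prod_const]
  -- divergence of the series
  have hq_ne : q * q ≠ 0 := by
    apply mul_ne_zero <;>
    · apply pow_ne_zero
      simp [ENNReal.div_eq_zero_iff]
  have htsum : (∑' n, (μ.prod μ) (A n)) = ⊤ := by
    rw [tsum_congr hAn]
    exact ENNReal.tsum_const_eq_top_of_ne_zero hq_ne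
  -- second Borel–Cantelli
  have hone : (μ.prod μ) (Filter.limsup A Filter.atTop) = 1 :=
    ProbabilityTheory.measure_limsup_eq_one hmA hindep htsum
  have hae : ∀ᵐ p ∂(μ.prod μ), p ∈ Filter.limsup A Filter.atTop := by
    rw [ae_iff]
    have hm : MeasurableSet (Filter.limsup A Filter.atTop) :=
      MeasurableSet.measurableSet_limsup hmA
    have : {p : (ℕ → ℕ) × (ℕ → ℕ) | p ∉ Filter.limsup A Filter.atTop}
        = (Filter.limsup A Filter.atTop)ᶜ := rfl
    rw [this, measure_compl hm (measure_ne_top _ _), hone, measure_univ, tsub_self]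
  filter_upwards [hae] with p hp
  rw [Filter.mem_limsup_iff_frequently_mem] at hp
  rw [Filter.frequently_atTop] at hp
  -- deterministic part
  apply Set.infinite_of_forall_exists_gt
  intro a
  obtain ⟨n, hn, hpA⟩ := hp (a + 1)
  set Ssum : ℕ → ℤ := fun N => ∑ i ∈ Finset.range (N + 1), ((p.1 i : ℤ) - (p.2 i : ℤ))
    with hSsum
  have hstep : ∀ j, j ≤ k → Ssum (k * n + j) = Ssum (k * n) + j := by
    intro j hj
    induction j with
    | zero => simp
    | succ j ih =>
      have hj' : j ≤ k := Nat.le_of_succ_le hj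
      have hmem : k * n + (j + 1) ∈ blk n :=
        Finset.mem_image.2 ⟨j + 1, Finset.mem_Icc.2 ⟨by omega, hj⟩, rfl⟩
      have h1 : p.1 (k * n + (j + 1)) = 1 := hpA.1 _ hmem
      have h0 : p.2 (k * n + (j + 1)) = 0 := hpA.2 _ hmem
      have key : Ssum (k * n + (j + 1))
          = Ssum (k * n + j) + ((p.1 (k * n + (j + 1)) : ℤ) - (p.2 (k * n + (j + 1)) : ℤ)) :=
        Finset.sum_range_succ _ _
      rw [key, ih hj', h1, h0]
      push_cast
      ring
  set S : ℤ := Ssum (k * n) with hS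
  set r : ℤ := (-S) % (k : ℤ) with hr
  have hkz : (0 : ℤ) < (k : ℤ) := by exact_mod_cast hk0
  have hr0 : 0 ≤ r := Int.emod_nonneg _ (by omega)
  have hrk : r < k := Int.emod_lt_of_pos _ hkz
  set j : ℕ := r.toNat with hjdef
  have hjr : (j : ℤ) = r := Int.toNat_of_nonneg hr0
  have hjk : j ≤ k := by omega
  refine ⟨k * n + j, ?_, ?_⟩
  · show Ssum (k * n + j) % (k : ℤ) = 0
    rw [hstep j hjk, hjr]
    have hdvd : (k : ℤ) ∣ S + r := by
      refine ⟨-((-S) / k), ?_⟩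
      have h := Int.emod_add_mul_ediv (-S) (k : ℤ)
      rw [mul_neg]
      rw [hr]
      linarith
    exact Int.emod_eq_zero_of_dvd hdvd
  · have h2n : 2 * n ≤ k * n := Nat.mul_le_mul_right n hk
    omega
end

section
/- Let T be a measure-preserving invertible transformation of a probability space (Z, μ), and suppose there is a sequence of finite measurable partitions Δ_n of Z with Δ_n = {T^j(A_n^0) : 0 ≤ j < m_n} for some measurable sets A_n^0 and integers m_n → ∞, such that Δ_{n+1} refines Δ_n and each atom of Δ_n is a (disjoint) union of atoms of Δ_{n+1} of the form T^{i + t·m_n}(A_{n+1}^0), and the partitions Δ_n generate the σ-algebra. Then T is approximately transitive: for any f_1,...,f_r ∈ L¹_+(Z,μ) and ε > 0 there exist f ∈ L¹_+(Z,μ), integers n_1,...,n_s and coefficients λ_{j,k} ≥ 0 with ‖f_j − Σ_k λ_{j,k} f∘T^{n_k}‖_1 ≤ ε for all j. -/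
open MeasureTheory Finset Filter

/-!
The partitions `Δ_n` increase and generate the σ-algebra, so by Lévy's upward theorem
`μ[f_j | Δ_n] → f_j` in `L¹` for every `j`; fix `n` with all `r` errors below `ε`. A
`Δ_n`-measurable function is constant on each level `T^t A_n`, hence equal to
`∑_t c_t · 1_{A_n} ∘ T^{-t}` with `c_t` its value at `T^t a` for any `a ∈ A_n`. So the single
function `g = 1_{A_n}` with the powers `T^{-t}`, `t < m_n`, approximates all the `f_j` at once,
and the coefficients are nonnegative because conditional expectation preserves positivity.
-/

namespace MeasurableSpace

variable {α : Type*} {C : Set (Set α)} {x y : α}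

theorem mem_iff_mem_of_measurableSet_generateFrom (h : ∀ s ∈ C, x ∈ s ↔ y ∈ s) {s : Set α}
    (hs : MeasurableSet[generateFrom C] s) : x ∈ s ↔ y ∈ s := by
  induction s, hs using generateFrom_induction with
  | hC s hs _ => exact h s hs
  | empty => rfl
  | compl s _ ih => exact ih.not
  | iUnion s _ ih =>
    simp only [Set.mem_iUnion]
    exact exists_congr ih

theorem eq_of_measurable_generateFrom {β : Type*} [MeasurableSpace β] [MeasurableSingletonClass β]
    {f : α → β} (hf : Measurable[generateFrom C] f) (h : ∀ s ∈ C, x ∈ s ↔ y ∈ s) : f x = f y :=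
  ((mem_iff_mem_of_measurableSet_generateFrom h (hf (measurableSet_singleton (f x)))).mp rfl).symm

end MeasurableSpace

theorem Finset.sum_indicator_const_eq_of_forall_mem_eq {ι α M : Type*} [AddCommMonoid M]
    {s : Finset ι} {t : ι → Set α} (hdisj : (s : Set ι).PairwiseDisjoint t)
    (hcover : ⋃ i ∈ s, t i = Set.univ) {h : α → M} {c : ι → M}
    (hc : ∀ i ∈ s, ∀ x ∈ t i, h x = c i) (z : α) :
    ∑ i ∈ s, (t i).indicator (fun _ => c i) z = h z := calc
  ∑ i ∈ s, (t i).indicator (fun _ => c i) z = ∑ i ∈ s, (t i).indicator h z :=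
    sum_congr rfl fun i hi => by rw [Set.indicator_congr fun x hx => (hc i hi x hx).symm]
  _ = h z := by rw [← indicator_biUnion_apply s t hdisj, hcover, Set.indicator_univ]

theorem MeasureTheory.tendsto_eLpNorm_condExp_sub_of_iSup_eq {Ω : Type*} [m0 : MeasurableSpace Ω]
    {μ : Measure Ω} [IsFiniteMeasure μ] {ℱ : ℕ → MeasurableSpace Ω} (hmono : Monotone ℱ)
    (hsup : ⨆ n, ℱ n = m0) {g : Ω → ℝ} (hg : Integrable g μ) :
    Tendsto (fun n => eLpNorm (μ[g | ℱ n] - g) 1 μ) atTop (nhds 0) := by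
  let F : Filtration ℕ m0 := ⟨ℱ, hmono, fun n => hsup ▸ le_iSup ℱ n⟩
  have hg_self : μ[g | ⨆ n, F n] =ᵐ[μ] g := by
    change μ[g | ⨆ n, ℱ n] =ᵐ[μ] g
    rw [hsup]
    exact condExp_of_aestronglyMeasurable' le_rfl hg.1 hg
  refine (tendsto_eLpNorm_condExp (ℱ := F) g).congr fun n => eLpNorm_congr_ae ?_
  filter_upwards [hg_self] with x hx
  simp only [Pi.sub_apply, hx]
  rfl

theorem MeasureTheory.integral_abs_sub_le_of_eLpNorm_sub_le {α : Type*} [MeasurableSpace α]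
    {μ : Measure α} {f g : α → ℝ} (hf : Integrable f μ) (hg : Integrable g μ) {ε : ℝ}
    (hε : 0 ≤ ε) (h : eLpNorm (g - f) 1 μ ≤ ENNReal.ofReal ε) :
    ∫ x, |f x - g x| ∂μ ≤ ε := by
  rw [eLpNorm_sub_comm, ← ofReal_lpNorm (memLp_one_iff_integrable.2 (hf.sub hg)),
    ENNReal.ofReal_le_ofReal_iff hε, lpNorm_one_eq_integral_norm (hf.sub hg).1] at h
  simpa only [Real.norm_eq_abs, Pi.sub_apply] using h

theorem Set.Nonempty.of_biUnion_image_eq_univ {ι α β : Type*} [Nonempty β] {s : Finset ι}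
    {f : ι → α → β} {A : Set α} (h : ⋃ i ∈ s, f i '' A = Set.univ) : A.Nonempty := by
  rw [Set.nonempty_iff_ne_empty]
  rintro rfl
  simp only [Set.image_empty, Set.iUnion_empty] at h
  exact Set.empty_ne_univ h

section Tower

variable {Z : Type*} (T : Equiv.Perm Z)

/-- `towerLevels T (A n) (m n)` is the partition `Δ_n`. -/
def towerLevels (A : Set Z) (k : ℕ) : Set (Set Z) := {S | ∃ j < k, S = (T ^ j) '' A}

variable {T}

theorem generateFrom_towerLevels_mono {A B : Set Z} {k l : ℕ}
    (hrefine : ∀ i < k, (T ^ i) '' A = ⋃ t ∈ range (l / k), (T ^ (i + t * k)) '' B) :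
    MeasurableSpace.generateFrom (towerLevels T A k)
      ≤ MeasurableSpace.generateFrom (towerLevels T B l) := by
  refine MeasurableSpace.generateFrom_le fun _ ⟨i, hi, hS⟩ => hS ▸ ?_
  rw [hrefine i hi]
  refine MeasurableSet.biUnion (range (l / k)).countable_toSet fun t ht => ?_
  refine MeasurableSpace.measurableSet_generateFrom ⟨i + t * k, ?_, rfl⟩
  have hkl : (t + 1) * k ≤ l := (Nat.le_div_iff_mul_le (by omega)).mp (mem_range.mp ht)
  nlinarith

theorem mem_iff_mem_of_mem_towerLevels {A : Set Z} {k i : ℕ}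
    (hdisj : Set.Pairwise (Set.Iio k) (fun i j => Disjoint ((T ^ i) '' A) ((T ^ j) '' A)))
    (hi : i < k) {x y : Z} (hx : x ∈ (T ^ i) '' A) (hy : y ∈ (T ^ i) '' A) :
    ∀ S ∈ towerLevels T A k, x ∈ S ↔ y ∈ S := by
  rintro _ ⟨j, hj, rfl⟩
  by_cases hij : i = j
  · subst hij
    exact iff_of_true hx hy
  · have hdisj_ij := Set.disjoint_left.mp (hdisj hi hj hij)
    exact iff_of_false (hdisj_ij hx) (hdisj_ij hy)

theorem indicator_perm_zpow_neg_apply {A : Set Z} (j : ℕ) (z : Z) :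
    A.indicator 1 ((T ^ (-(j : ℤ))) z) = ((T ^ j) '' A).indicator (1 : Z → ℝ) z := by
  rw [Equiv.image_eq_preimage_symm, zpow_neg, zpow_natCast]
  exact (Set.indicator_comp_right _).symm

theorem sum_mul_indicator_perm_zpow_eq_of_measurable {A : Set Z} {a : Z} (ha : a ∈ A) {k : ℕ}
    (hdisj : Set.Pairwise (Set.Iio k) (fun i j => Disjoint ((T ^ i) '' A) ((T ^ j) '' A)))
    (hcover : ⋃ j ∈ range k, (T ^ j) '' A = Set.univ) {h : Z → ℝ}
    (hh : Measurable[MeasurableSpace.generateFrom (towerLevels T A k)] h) (z : Z) :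
    ∑ t : Fin k, h ((T ^ (t : ℕ)) a) * A.indicator 1 ((T ^ (-(t : ℤ))) z) = h z := by
  rw [Fin.sum_univ_eq_sum_range (fun t => h ((T ^ t) a) * A.indicator 1 ((T ^ (-(t : ℤ))) z))]
  simp only [indicator_perm_zpow_neg_apply, ← Set.indicator_const_mul, Pi.one_apply, mul_one]
  refine sum_indicator_const_eq_of_forall_mem_eq (by rwa [coe_range]) hcover
    (fun i hi x hx => ?_) z
  exact MeasurableSpace.eq_of_measurable_generateFrom hh
    (mem_iff_mem_of_mem_towerLevels hdisj (mem_range.mp hi) hx ⟨a, ha, rfl⟩)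

theorem iSup_generateFrom_towerLevels (A : ℕ → Set Z) (m : ℕ → ℕ) :
    ⨆ n, MeasurableSpace.generateFrom (towerLevels T (A n) (m n))
      = MeasurableSpace.generateFrom {S | ∃ n, ∃ j < m n, S = (T ^ j) '' A n} := by
  rw [MeasurableSpace.iSup_generateFrom]
  congr 1
  ext
  simp [towerLevels]

end Tower

theorem odometer_tower_structure_implies_AT_general
    {Z : Type*} [MeasurableSpace Z] (μ : Measure Z) [IsProbabilityMeasure μ]
    (T : Equiv.Perm Z)
    (A : ℕ → Set Z) (hAmeas : ∀ n, MeasurableSet (A n))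
    (m : ℕ → ℕ)
    -- the sets `T^j (A n)`, `0 ≤ j < m n`, form a partition of `Z`
    (hpart_disj : ∀ n, Set.Pairwise (Set.Iio (m n))
      (fun i j => Disjoint ((T ^ i) '' A n) ((T ^ j) '' A n)))
    (hpart_cover : ∀ n, (⋃ j ∈ Finset.range (m n), (T ^ j) '' A n) = Set.univ)
    -- each atom of `Δ n` is a disjoint union of atoms of `Δ (n+1)` of the stated form
    (hrefine : ∀ n, ∀ i < m n,
      (T ^ i) '' A n
        = ⋃ t ∈ Finset.range (m (n + 1) / m n), (T ^ (i + t * m n)) '' A (n + 1))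
    -- the partitions generate the σ-algebra
    (hgen : MeasurableSpace.generateFrom
        {S : Set Z | ∃ n, ∃ j < m n, S = (T ^ j) '' A n}
      = (inferInstance : MeasurableSpace Z)) :
    -- approximate transitivity of T
    ∀ (r : ℕ) (f : Fin r → Z → ℝ),
      (∀ j, Integrable (f j) μ) → (∀ j, ∀ z, 0 ≤ f j z) →
      ∀ ε > (0 : ℝ),
      ∃ (g : Z → ℝ), Integrable g μ ∧ (∀ z, 0 ≤ g z) ∧
      ∃ (s : ℕ) (nk : Fin s → ℤ) (lam : Fin r → Fin s → ℝ),
        (∀ j t, 0 ≤ lam j t) ∧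
        ∀ j, ∫ z, |f j z - ∑ t, lam j t * g ((T ^ (nk t)) z)| ∂μ ≤ ε := by
  intro r f hf hf_nonneg ε hε
  set ℱ : ℕ → MeasurableSpace Z :=
    fun n => MeasurableSpace.generateFrom (towerLevels T (A n) (m n))
  have hℱ_sup : ⨆ n, ℱ n = ‹MeasurableSpace Z› := (iSup_generateFrom_towerLevels A m).trans hgen
  have hℱ_mono : Monotone ℱ :=
    monotone_nat_of_le_succ fun n => generateFrom_towerLevels_mono (hrefine n)
  obtain ⟨n, hn⟩ := (eventually_all.mpr fun j =>
    (tendsto_eLpNorm_condExp_sub_of_iSup_eq hℱ_mono hℱ_sup (hf j)).eventually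
      (gt_mem_nhds (ENNReal.ofReal_pos.mpr hε))).exists
  have : Nonempty Z := nonempty_of_isProbabilityMeasure μ
  obtain ⟨a, ha⟩ := Set.Nonempty.of_biUnion_image_eq_univ (hpart_cover n)
  -- `μ[f j | ℱ n]` is nonnegative only almost everywhere, and `a` may lie in the exceptional set
  set h : Fin r → Z → ℝ := fun j z => max (μ[f j | ℱ n] z) 0
  refine ⟨(A n).indicator 1, (integrable_const 1).indicator (hAmeas n),
    Set.indicator_nonneg fun _ _ => zero_le_one, m n, fun t => -(t : ℤ),
    fun j t => h j ((T ^ (t : ℕ)) a), fun j t => le_max_right _ _, fun j => ?_⟩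
  have hh : ∀ z, ∑ t : Fin (m n), h j ((T ^ (t : ℕ)) a) * (A n).indicator 1 ((T ^ (-(t : ℤ))) z)
      = h j z :=
    sum_mul_indicator_perm_zpow_eq_of_measurable ha (hpart_disj n) (hpart_cover n)
      (stronglyMeasurable_condExp.measurable.max measurable_const)
  have hh_ae : h j =ᵐ[μ] μ[f j | ℱ n] := by
    filter_upwards [condExp_nonneg (ae_of_all _ (hf_nonneg j))] with z hz
    exact max_eq_left hz
  calc ∫ z, |f j z - ∑ t : Fin (m n),
          h j ((T ^ (t : ℕ)) a) * (A n).indicator 1 ((T ^ (-(t : ℤ))) z)| ∂μ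
      = ∫ z, |f j z - μ[f j | ℱ n] z| ∂μ :=
        integral_congr_ae (hh_ae.mono fun z hz => by simp only [hh, hz])
    _ ≤ ε := integral_abs_sub_le_of_eLpNorm_sub_le (hf j) integrable_condExp hε.le (hn j).le

theorem odometer_tower_structure_implies_AT
    {Z : Type*} [MeasurableSpace Z] (μ : Measure Z) [IsProbabilityMeasure μ]
    (T : Equiv.Perm Z) (hTmeas : Measurable T) (hTinvmeas : Measurable T.symm)
    (hmp : MeasurePreserving T μ μ)
    (A : ℕ → Set Z) (hAmeas : ∀ n, MeasurableSet (A n))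
    (m : ℕ → ℕ) (hm : Tendsto m atTop atTop)
    -- the sets `T^j (A n)`, `0 ≤ j < m n`, form a partition of `Z`
    (hpart_disj : ∀ n, Set.Pairwise (Set.Iio (m n))
      (fun i j => Disjoint ((T ^ i) '' A n) ((T ^ j) '' A n)))
    (hpart_cover : ∀ n, (⋃ j ∈ Finset.range (m n), (T ^ j) '' A n) = Set.univ)
    -- each atom of `Δ n` is a disjoint union of atoms of `Δ (n+1)` of the stated form
    (hrefine : ∀ n, ∀ i < m n,
      (T ^ i) '' A n
        = ⋃ t ∈ Finset.range (m (n + 1) / m n), (T ^ (i + t * m n)) '' A (n + 1))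
    -- the partitions generate the σ-algebra
    (hgen : MeasurableSpace.generateFrom
        {S : Set Z | ∃ n, ∃ j < m n, S = (T ^ j) '' A n}
      = (inferInstance : MeasurableSpace Z)) :
    -- approximate transitivity of T
    ∀ (r : ℕ) (f : Fin r → Z → ℝ),
      (∀ j, Integrable (f j) μ) → (∀ j, ∀ z, 0 ≤ f j z) →
      ∀ ε > (0 : ℝ),
      ∃ (g : Z → ℝ), Integrable g μ ∧ (∀ z, 0 ≤ g z) ∧
      ∃ (s : ℕ) (nk : Fin s → ℤ) (lam : Fin r → Fin s → ℝ),
        (∀ j t, 0 ≤ lam j t) ∧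
        ∀ j, ∫ z, |f j z - ∑ t, lam j t * g ((T ^ (nk t)) z)| ∂μ ≤ ε :=
  odometer_tower_structure_implies_AT_general μ T A hAmeas m hpart_disj hpart_cover hrefine hgen
end

section
/- Let S be the map on Z = ∏_{n≥0} Z_n (Z_0 = {0,...,k−1}, Z_n = {0,...,k} for n ≥ 1) defined by: S(a,k,k,k,...) = (a−1 mod k, 0,0,0,...), and for z ≠ (a,k,k,...), S(z)_0 = a_z, S(z)_n = 0 for 1 ≤ n < N(z), S(z)_{N(z)} = z_{N(z)} + 1, S(z)_n = z_n for n > N(z), where N(z) = min{n ≥ 1 : z_n < k} and a_z ≡ z_0 + z_1 + ··· + z_{N(z)−1} − 1 (mod k) with a_z ∈ {0,...,k−1}. Then S preserves the product of uniform measures on Z. -/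
open MeasureTheory Finset

open Classical in
/-- The twisted odometer `S`: writing `N(z) = min {n ≥ 1 : z n < k}`, it carries in
coordinates `1,…,N(z)` and replaces the zeroth coordinate by
`z 0 + z 1 + ⋯ + z (N(z)-1) - 1 (mod k)`; the point `(a,k,k,…)` goes to
`(a-1 mod k, 0,0,…)`. -/
noncomputable def twistedOdometer (k : ℕ) (z : ℕ → ℕ) : ℕ → ℕ :=
  if h : ∃ n, 1 ≤ n ∧ z n < k then
    fun m =>
      if m = 0 then ((∑ i ∈ Finset.range (Nat.find h), z i) + (k - 1)) % k
      else if m < Nat.find h then 0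
      else if m = Nat.find h then z m + 1
      else z m
  else fun m => if m = 0 then (z 0 + (k - 1)) % k else 0

namespace TwistedAux

/-- evaluation of the odometer when some coordinate can be increased -/
lemma tS_eval_pos {k : ℕ} {z : ℕ → ℕ} (hE : ∃ n, 1 ≤ n ∧ z n < k) (n : ℕ) :
    twistedOdometer k z n =
      if n = 0 then ((∑ i ∈ Finset.range (Nat.find hE), z i) + (k - 1)) % k
      else if n < Nat.find hE then 0
      else if n = Nat.find hE then z n + 1
      else z n := by
  rw [twistedOdometer, dif_pos hE]

lemma tS_eval_neg {k : ℕ} {z : ℕ → ℕ} (hE : ¬ ∃ n, 1 ≤ n ∧ z n < k) (n : ℕ) :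
    twistedOdometer k z n = if n = 0 then (z 0 + (k - 1)) % k else 0 := by
  rw [twistedOdometer, dif_neg hE]

lemma tS_eval_pos_zero {k : ℕ} {z : ℕ → ℕ} (hE : ∃ n, 1 ≤ n ∧ z n < k) :
    twistedOdometer k z 0 = ((∑ i ∈ Finset.range (Nat.find hE), z i) + (k - 1)) % k := by
  rw [tS_eval_pos hE, if_pos rfl]

lemma tS_eval_lt {k : ℕ} {z : ℕ → ℕ} (hE : ∃ n, 1 ≤ n ∧ z n < k) {n : ℕ}
    (h1 : 1 ≤ n) (h2 : n < Nat.find hE) : twistedOdometer k z n = 0 := by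
  rw [tS_eval_pos hE, if_neg (by omega), if_pos h2]

lemma tS_eval_find {k : ℕ} {z : ℕ → ℕ} (hE : ∃ n, 1 ≤ n ∧ z n < k) :
    twistedOdometer k z (Nat.find hE) = z (Nat.find hE) + 1 := by
  have h1 : 1 ≤ Nat.find hE := (Nat.find_spec hE).1
  rw [tS_eval_pos hE, if_neg (by omega), if_neg (lt_irrefl _), if_pos rfl]

lemma tS_eval_gt {k : ℕ} {z : ℕ → ℕ} (hE : ∃ n, 1 ≤ n ∧ z n < k) {n : ℕ}
    (h2 : Nat.find hE < n) : twistedOdometer k z n = z n := by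
  have h1 : 1 ≤ Nat.find hE := (Nat.find_spec hE).1
  rw [tS_eval_pos hE, if_neg (by omega), if_neg (by omega), if_neg (by omega)]

/-- prefix cylinder -/
def tCyl (m : ℕ) (a : ℕ → ℕ) : Set (ℕ → ℕ) := {z | ∀ n < m, z n = a n}

@[simp] lemma mem_tCyl {z : ℕ → ℕ} {m : ℕ} {a : ℕ → ℕ} :
    z ∈ tCyl m a ↔ ∀ n < m, z n = a n := Iff.rfl

lemma tCyl_measurable (m : ℕ) (a : ℕ → ℕ) : MeasurableSet (tCyl m a) := by
  have h : tCyl m a = ⋂ n ∈ Set.Iio m, (fun z : ℕ → ℕ => z n) ⁻¹' {a n} := by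
    ext z; simp [tCyl]
  rw [h]
  exact MeasurableSet.biInter (Set.to_countable _) fun n _ =>
    measurable_pi_apply n (measurableSet_singleton _)

lemma tCyl_generate :
    (MeasurableSpace.pi : MeasurableSpace (ℕ → ℕ)) =
      MeasurableSpace.generateFrom {s : Set (ℕ → ℕ) | ∃ m a, s = tCyl m a} := by
  refine le_antisymm ?_ (MeasurableSpace.generateFrom_le ?_)
  · have key : ∀ i c : ℕ, MeasurableSet[MeasurableSpace.generateFrom
        {s : Set (ℕ → ℕ) | ∃ m a, s = tCyl m a}] ((fun z : ℕ → ℕ => z i) ⁻¹' {c}) := by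
      intro i c
      have h : ((fun z : ℕ → ℕ => z i) ⁻¹' {c}) =
          ⋃ v : Fin i → ℕ, tCyl (i + 1) (fun n => if h : n < i then v ⟨n, h⟩ else c) := by
        ext z
        simp only [Set.mem_preimage, Set.mem_singleton_iff, Set.mem_iUnion, mem_tCyl]
        constructor
        · intro hz
          refine ⟨fun j => z j, fun n hn => ?_⟩
          by_cases h : n < i
          · simp [h]
          · have hni : n = i := by omega
            subst hni; simp [h, hz]
        · rintro ⟨v, hv⟩
          have := hv i (by omega)
          simpa using this
      rw [h]
      exact MeasurableSet.iUnion fun v =>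
        MeasurableSpace.measurableSet_generateFrom ⟨i + 1, _, rfl⟩
    have hpi : (MeasurableSpace.pi : MeasurableSpace (ℕ → ℕ))
        = ⨆ i : ℕ, MeasurableSpace.comap (fun z : ℕ → ℕ => z i) inferInstance := rfl
    rw [hpi]
    refine iSup_le fun i => ?_
    intro s hs
    obtain ⟨s', _, rfl⟩ := hs
    have h2 : (fun z : ℕ → ℕ => z i) ⁻¹' s' = ⋃ c ∈ s', (fun z : ℕ → ℕ => z i) ⁻¹' {c} := by
      ext z; simp
    rw [h2]
    exact MeasurableSet.biUnion (Set.to_countable _) fun c _ => key i c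
  · rintro s ⟨m, a, rfl⟩
    exact tCyl_measurable m a

lemma tCyl_inter {m m' : ℕ} {a a' : ℕ → ℕ} (hm : m ≤ m')
    (h : (tCyl m a ∩ tCyl m' a').Nonempty) : tCyl m a ∩ tCyl m' a' = tCyl m' a' := by
  obtain ⟨z, hz1, hz2⟩ := h
  ext w
  refine ⟨fun hw => hw.2, fun hw => ⟨fun n hn => ?_, hw⟩⟩
  rw [hw n (lt_of_lt_of_le hn hm), ← hz2 n (lt_of_lt_of_le hn hm), hz1 n hn]

lemma tCyl_pi : IsPiSystem {s : Set (ℕ → ℕ) | ∃ m a, s = tCyl m a} := by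
  rintro s ⟨m, a, rfl⟩ t ⟨m', a', rfl⟩ hne
  rcases le_total m m' with h | h
  · exact ⟨m', a', tCyl_inter h hne⟩
  · rw [Set.inter_comm] at hne ⊢
    exact ⟨m, a, tCyl_inter h hne⟩

/-- the good set: all digits in range -/
def tGood (k : ℕ) : Set (ℕ → ℕ) := {z | ∀ n, z n < digitBound k n}

lemma tS_good {k : ℕ} (hk : 2 ≤ k) {z : ℕ → ℕ} (hz : z ∈ tGood k) :
    twistedOdometer k z ∈ tGood k := by
  intro n
  by_cases hE : ∃ n, 1 ≤ n ∧ z n < k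
  · rw [tS_eval_pos hE]
    by_cases hn0 : n = 0
    · subst hn0
      simp only [if_pos rfl, digitBound]
      exact Nat.mod_lt _ (by omega)
    · rw [if_neg hn0]
      have hb : digitBound k n = k + 1 := by simp [digitBound, hn0]
      rw [hb]
      by_cases h1 : n < Nat.find hE
      · rw [if_pos h1]; omega
      · rw [if_neg h1]
        by_cases h2 : n = Nat.find hE
        · rw [if_pos h2]
          have hs := (Nat.find_spec hE).2
          rw [← h2] at hs
          omega
        · rw [if_neg h2]
          have := hz n
          rw [hb] at this
          exact this
  · rw [tS_eval_neg hE]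
    by_cases hn0 : n = 0
    · subst hn0
      simp only [if_pos rfl, digitBound]
      exact Nat.mod_lt _ (by omega)
    · rw [if_neg hn0]
      simp [digitBound, hn0]

lemma tmod1 {k a0 : ℕ} (hk : 2 ≤ k) (ha : a0 < k) :
    ((a0 + 1) % k + (k - 1)) % k = a0 := by
  rw [Nat.mod_add_mod, show a0 + 1 + (k - 1) = a0 + k by omega,
    Nat.add_mod_right, Nat.mod_eq_of_lt ha]

lemma tmod2 {k z0 : ℕ} (hk : 2 ≤ k) (hz : z0 < k) :
    ((z0 + (k - 1)) % k + 1) % k = z0 := by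
  rw [Nat.mod_add_mod, show z0 + (k - 1) + 1 = z0 + k by omega,
    Nat.add_mod_right, Nat.mod_eq_of_lt hz]

lemma tsum_mod {k : ℕ} (hk : 2 ≤ k) {z : ℕ → ℕ} {N : ℕ} (hN : 1 ≤ N)
    (hz : ∀ i, 1 ≤ i → i < N → z i = k) :
    (∑ i ∈ Finset.range N, z i + (k - 1)) % k = (z 0 + (k - 1)) % k := by
  induction N with
  | zero => omega
  | succ n ih =>
    rcases Nat.eq_zero_or_pos n with rfl | hn
    · simp
    · rw [Finset.sum_range_succ, hz n hn (by omega)]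
      have hih := ih hn (fun i h1 h2 => hz i h1 (by omega))
      rw [show (∑ i ∈ Finset.range n, z i) + k + (k - 1)
            = ((∑ i ∈ Finset.range n, z i) + (k - 1)) + k by omega,
          Nat.add_mod_right]
      exact hih

lemma tS_key {k : ℕ} (hk : 2 ≤ k) {m : ℕ} (hm : 1 ≤ m) {a : ℕ → ℕ}
    (hval : ∀ n < m, a n < digitBound k n) :
    ∃ a' : ℕ → ℕ, (∀ n < m, a' n < digitBound k n) ∧
      ∀ z ∈ tGood k, ((∀ n < m, twistedOdometer k z n = a n) ↔ ∀ n < m, z n = a' n) := by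
  have ha0 : a 0 < k := by have := hval 0 hm; simpa [digitBound] using this
  by_cases h : ∃ n, 1 ≤ n ∧ n < m ∧ 1 ≤ a n
  · -- there is a carry position
    obtain ⟨hN1, hNm, haN⟩ := Nat.find_spec h
    set N := Nat.find h with hNdef
    have hmin : ∀ i, 1 ≤ i → i < N → a i = 0 := by
      intro i h1 h2
      have h4 := Nat.find_min h h2
      have h3 : i < m := by omega
      by_contra hne
      exact h4 ⟨h1, h3, by omega⟩
    have haNk : a N < k + 1 := by
      have := hval N hNm
      simpa [digitBound, show N ≠ 0 by omega] using this
    refine ⟨fun n => if n = 0 then (a 0 + 1) % k else if n < N then k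
        else if n = N then a N - 1 else a n, ?_, ?_⟩
    · intro n hn
      beta_reduce
      by_cases h0 : n = 0
      · subst h0
        simpa [digitBound] using Nat.mod_lt (a 0 + 1) (show 0 < k by omega)
      · rw [if_neg h0]
        have hb : digitBound k n = k + 1 := by simp [digitBound, h0]
        rw [hb]
        by_cases h1 : n < N
        · rw [if_pos h1]; omega
        · rw [if_neg h1]
          by_cases h2 : n = N
          · rw [if_pos h2]; omega
          · rw [if_neg h2]
            have := hval n hn
            simp only [digitBound, h0, if_false] at this
            omega
    · intro z hzG
      have hzG' : ∀ n, 1 ≤ n → z n < k + 1 := fun n hn => by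
        have := hzG n; simpa [digitBound, show n ≠ 0 by omega] using this
      have hz0k : z 0 < k := by have := hzG 0; simpa [digitBound] using this
      constructor
      · -- S z matches a  →  z matches a'
        intro hS
        by_cases hE : ∃ n, 1 ≤ n ∧ z n < k
        · obtain ⟨hN'1, hN'k⟩ := Nat.find_spec hE
          have zi' : ∀ i, 1 ≤ i → i < Nat.find hE → z i = k := by
            intro i h1 h2
            have h3 := Nat.find_min hE h2
            have h4 := hzG' i h1
            omega
          have hN'm : Nat.find hE < m := by
            by_contra hge
            have h0 := hS N hNm
            rw [tS_eval_lt hE hN1 (by omega)] at h0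
            omega
          have hNN' : N = Nat.find hE := by
            rw [hNdef, Nat.find_eq_iff]
            refine ⟨⟨hN'1, hN'm, ?_⟩, fun i hi => ?_⟩
            · have := hS (Nat.find hE) hN'm
              rw [tS_eval_find hE] at this
              omega
            · rintro ⟨h1, h2, h3⟩
              have := hS i h2
              rw [tS_eval_lt hE h1 hi] at this
              omega
          have hS0 : a 0 = (z 0 + (k - 1)) % k := by
            have := hS 0 hm
            rw [tS_eval_pos_zero hE, tsum_mod hk hN'1 zi'] at this
            omega
          intro n hn
          beta_reduce
          by_cases h0 : n = 0
          · subst h0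
            rw [if_pos rfl, hS0, tmod2 hk hz0k]
          · rw [if_neg h0]
            by_cases h1 : n < N
            · rw [if_pos h1]
              exact zi' n (by omega) (by omega)
            · rw [if_neg h1]
              by_cases h2 : n = N
              · rw [if_pos h2]
                have h3 := hS n hn
                rw [h2, hNN', tS_eval_find hE] at h3
                rw [h2, hNN']
                omega
              · rw [if_neg h2]
                have := hS n hn
                rw [tS_eval_gt hE (by omega)] at this
                omega
        · -- no coordinate below k : contradiction with a N ≥ 1
          exfalso
          have := hS N hNm
          rw [tS_eval_neg hE, if_neg (by omega)] at this
          omega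
      · -- z matches a'  →  S z matches a
        intro hz
        have z0 : z 0 = (a 0 + 1) % k := by simpa using hz 0 hm
        have zN : z N = a N - 1 := by
          have := hz N hNm
          beta_reduce at this
          rw [if_neg (by omega), if_neg (by omega), if_pos rfl] at this
          exact this
        have zi : ∀ i, 1 ≤ i → i < N → z i = k := by
          intro i h1 h2
          have := hz i (by omega)
          beta_reduce at this
          rw [if_neg (by omega), if_pos h2] at this
          exact this
        have hE : ∃ n, 1 ≤ n ∧ z n < k := ⟨N, hN1, by omega⟩
        have hfind : Nat.find hE = N := by
          rw [Nat.find_eq_iff]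
          refine ⟨⟨hN1, by omega⟩, fun i hi => ?_⟩
          rintro ⟨h1, h2⟩
          rw [zi i h1 hi] at h2
          omega
        intro n hn
        by_cases h0 : n = 0
        · subst h0
          rw [tS_eval_pos_zero hE, hfind, tsum_mod hk hN1 zi, z0, tmod1 hk ha0]
        · by_cases h1 : n < N
          · rw [tS_eval_lt hE (by omega) (by omega), eq_comm]
            exact hmin n (by omega) h1
          · by_cases h2 : n = N
            · subst h2
              rw [← hfind, tS_eval_find hE, hfind]
              omega
            · rw [tS_eval_gt hE (by omega)]
              have := hz n hn
              beta_reduce at this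
              rw [if_neg h0, if_neg h1, if_neg h2] at this
              exact this
  · -- no carry position : pure carry case
    have hno : ∀ n, 1 ≤ n → n < m → a n = 0 := by
      intro n h1 h2
      by_contra hne
      exact h ⟨n, h1, h2, by omega⟩
    refine ⟨fun n => if n = 0 then (a 0 + 1) % k else k, ?_, ?_⟩
    · intro n hn
      beta_reduce
      by_cases h0 : n = 0
      · subst h0
        simpa [digitBound] using Nat.mod_lt (a 0 + 1) (show 0 < k by omega)
      · rw [if_neg h0]
        simp [digitBound, h0]
    · intro z hzG
      have hzG' : ∀ n, 1 ≤ n → z n < k + 1 := fun n hn => by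
        have := hzG n; simpa [digitBound, show n ≠ 0 by omega] using this
      have hz0k : z 0 < k := by have := hzG 0; simpa [digitBound] using this
      constructor
      · intro hS
        by_cases hE : ∃ n, 1 ≤ n ∧ z n < k
        · obtain ⟨hN'1, hN'k⟩ := Nat.find_spec hE
          have zi' : ∀ i, 1 ≤ i → i < Nat.find hE → z i = k := by
            intro i h1 h2
            have h3 := Nat.find_min hE h2
            have h4 := hzG' i h1
            omega
          have hN'm : m ≤ Nat.find hE := by
            by_contra hlt
            have h5 := hS (Nat.find hE) (by omega)
            rw [tS_eval_find hE] at h5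
            have := hno (Nat.find hE) hN'1 (by omega)
            omega
          intro n hn
          beta_reduce
          by_cases h0 : n = 0
          · subst h0
            rw [if_pos rfl]
            have := hS 0 hm
            rw [tS_eval_pos_zero hE, tsum_mod hk hN'1 zi'] at this
            rw [← this, tmod2 hk hz0k]
          · rw [if_neg h0]
            exact zi' n (by omega) (by omega)
        · intro n hn
          beta_reduce
          by_cases h0 : n = 0
          · subst h0
            rw [if_pos rfl]
            have := hS 0 hm
            rw [tS_eval_neg hE, if_pos rfl] at this
            rw [← this, tmod2 hk hz0k]
          · rw [if_neg h0]
            have h1 := hzG' n (by omega)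
            have : ¬ (z n < k) := fun hlt => hE ⟨n, by omega, hlt⟩
            omega
      · intro hz
        have z0 : z 0 = (a 0 + 1) % k := by simpa using hz 0 hm
        have zi : ∀ i, 1 ≤ i → i < m → z i = k := by
          intro i h1 h2
          have := hz i h2
          beta_reduce at this
          rw [if_neg (by omega)] at this
          exact this
        by_cases hE : ∃ n, 1 ≤ n ∧ z n < k
        · obtain ⟨hN'1, hN'k⟩ := Nat.find_spec hE
          have hN'm : m ≤ Nat.find hE := by
            rw [Nat.le_find_iff]
            rintro i hi ⟨h1, h2⟩
            rw [zi i h1 hi] at h2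
            omega
          have zi' : ∀ i, 1 ≤ i → i < Nat.find hE → z i = k := by
            intro i h1 h2
            by_cases him : i < m
            · exact zi i h1 him
            · have h3 := Nat.find_min hE h2
              have h4 := hzG' i h1
              omega
          intro n hn
          by_cases h0 : n = 0
          · subst h0
            rw [tS_eval_pos_zero hE, tsum_mod hk hN'1 zi', z0, tmod1 hk ha0]
          · rw [tS_eval_lt hE (by omega) (by omega), eq_comm]
            exact hno n (by omega) hn
        · intro n hn
          rw [tS_eval_neg hE]
          by_cases h0 : n = 0
          · subst h0
            rw [if_pos rfl, z0, tmod1 hk ha0]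
          · rw [if_neg h0, eq_comm]
            exact hno n (by omega) hn

lemma tS_meas (k : ℕ) : Measurable (twistedOdometer k) := by
  rw [measurable_pi_iff]
  intro m
  refine measurable_to_countable' fun c => ?_
  have hset : ((fun z => twistedOdometer k z m) ⁻¹' {c}) =
      (⋃ N : ℕ, ({z : ℕ → ℕ | (1 ≤ N ∧ z N < k) ∧ ∀ i < N, ¬(1 ≤ i ∧ z i < k)} ∩
        {z : ℕ → ℕ | (if m = 0 then ((∑ i ∈ Finset.range N, z i) + (k - 1)) % k
          else if m < N then 0 else if m = N then z m + 1 else z m) = c})) ∪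
      ({z : ℕ → ℕ | ∀ n, ¬(1 ≤ n ∧ z n < k)} ∩
        {z : ℕ → ℕ | (if m = 0 then (z 0 + (k - 1)) % k else 0) = c}) := by
    ext z
    by_cases hE : ∃ n, 1 ≤ n ∧ z n < k
    · simp only [Set.mem_preimage, Set.mem_singleton_iff, tS_eval_pos hE,
        Set.mem_union, Set.mem_iUnion, Set.mem_inter_iff, Set.mem_setOf_eq]
      constructor
      · intro hv
        exact Or.inl ⟨Nat.find hE, ⟨Nat.find_spec hE, fun i hi => Nat.find_min hE hi⟩, hv⟩
      · rintro (⟨N, ⟨hspec, hmin⟩, hv⟩ | ⟨hall, _⟩)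
        · have hNf : N = Nat.find hE := by
            rw [eq_comm, Nat.find_eq_iff]; exact ⟨hspec, hmin⟩
          rw [← hNf]; exact hv
        · obtain ⟨n, hn⟩ := hE
          exact absurd hn (hall n)
    · simp only [Set.mem_preimage, Set.mem_singleton_iff, tS_eval_neg hE,
        Set.mem_union, Set.mem_iUnion, Set.mem_inter_iff, Set.mem_setOf_eq]
      constructor
      · intro hv
        exact Or.inr ⟨fun n hn => hE ⟨n, hn⟩, hv⟩
      · rintro (⟨N, ⟨⟨hN1, hNk⟩, _⟩, _⟩ | ⟨_, hv⟩)
        · exact absurd ⟨N, hN1, hNk⟩ hE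
        · exact hv
  rw [hset]
  apply MeasurableSet.union
  · refine MeasurableSet.iUnion fun N => MeasurableSet.inter ?_ ?_
    · have h1 : {z : ℕ → ℕ | (1 ≤ N ∧ z N < k) ∧ ∀ i < N, ¬(1 ≤ i ∧ z i < k)} =
          ({z : ℕ → ℕ | 1 ≤ N} ∩ ((fun z : ℕ → ℕ => z N) ⁻¹' {x | x < k})) ∩
            ⋂ i ∈ Set.Iio N, ((fun z : ℕ → ℕ => z i) ⁻¹' {x | ¬(1 ≤ i ∧ x < k)}) := by
        ext z
        simp only [Set.mem_inter_iff, Set.mem_setOf_eq, Set.mem_preimage, Set.mem_iInter,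
          Set.mem_Iio]
      rw [h1]
      refine MeasurableSet.inter (MeasurableSet.inter ?_
          (measurable_pi_apply N (by trivial))) ?_
      · by_cases hN : 1 ≤ N
        · simp only [hN, Set.setOf_true]; exact MeasurableSet.univ
        · simp only [hN, Set.setOf_false]; exact MeasurableSet.empty
      · exact MeasurableSet.biInter (Set.to_countable _) fun i _ =>
          measurable_pi_apply i (by trivial)
    · have hf : Measurable (fun z : ℕ → ℕ =>
          (if m = 0 then ((∑ i ∈ Finset.range N, z i) + (k - 1)) % k
            else if m < N then 0 else if m = N then z m + 1 else z m)) := by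
        by_cases h0 : m = 0
        · simp only [h0, if_pos rfl]
          have hsum : Measurable fun z : ℕ → ℕ => ∑ i ∈ Finset.range N, z i :=
            Finset.measurable_sum _ fun i _ => measurable_pi_apply i
          exact (Measurable.of_discrete (f := fun t : ℕ => (t + (k - 1)) % k)).comp hsum
        · simp only [h0, if_false]
          by_cases h1 : m < N
          · simp only [h1, if_true]; exact measurable_const
          · simp only [h1, if_false]
            by_cases h2 : m = N
            · simp only [h2, if_true]
              exact (Measurable.of_discrete (f := fun t : ℕ => t + 1)).comp
                (measurable_pi_apply _)
            · simp only [h2, if_false]; exact measurable_pi_apply _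
      exact hf (measurableSet_singleton c)
  · refine MeasurableSet.inter ?_ ?_
    · have h1 : {z : ℕ → ℕ | ∀ n, ¬(1 ≤ n ∧ z n < k)} =
          ⋂ n : ℕ, ((fun z : ℕ → ℕ => z n) ⁻¹' {x | ¬(1 ≤ n ∧ x < k)}) := by
        ext z; simp only [Set.mem_setOf_eq, Set.mem_iInter, Set.mem_preimage]
      rw [h1]
      exact MeasurableSet.iInter fun n => measurable_pi_apply n (by trivial)
    · have hf : Measurable (fun z : ℕ → ℕ => if m = 0 then (z 0 + (k - 1)) % k else 0) := by
        by_cases h0 : m = 0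
        · simp only [h0, if_pos rfl]
          exact (Measurable.of_discrete (f := fun t : ℕ => (t + (k - 1)) % k)).comp
            (measurable_pi_apply _)
        · simp only [h0, if_false]; exact measurable_const
      exact hf (measurableSet_singleton c)

end TwistedAux

open TwistedAux in
theorem twistedOdometer_measurePreserving (k : ℕ) (hk : 2 ≤ k)
    (μ : Measure (ℕ → ℕ)) [IsProbabilityMeasure μ]
    (hcyl : ∀ s : Finset ℕ, ∀ a : ℕ → ℕ,
      μ {z | ∀ n ∈ s, z n = a n}
        = ∏ n ∈ s, (if a n < digitBound k n then (1 : ENNReal) / digitBound k n else 0)) :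
    MeasurePreserving (twistedOdometer k) μ μ := by
  -- single-coordinate null sets
  have h1 : ∀ n c : ℕ, digitBound k n ≤ c → μ {z : ℕ → ℕ | z n = c} = 0 := by
    intro n c hc
    have h := hcyl {n} (fun _ => c)
    rw [show {z : ℕ → ℕ | ∀ m ∈ ({n} : Finset ℕ), z m = (fun _ => c) m}
        = {z : ℕ → ℕ | z n = c} by ext z; simp] at h
    rw [h, Finset.prod_singleton, if_neg (by omega)]
  -- the good set is conull
  have hGnull : μ (tGood k)ᶜ = 0 := by
    have h2 : ∀ n, μ {z : ℕ → ℕ | digitBound k n ≤ z n} = 0 := by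
      intro n
      have he : {z : ℕ → ℕ | digitBound k n ≤ z n}
          = ⋃ j : ℕ, {z : ℕ → ℕ | z n = digitBound k n + j} := by
        ext z
        simp only [Set.mem_setOf_eq, Set.mem_iUnion]
        constructor
        · intro hle; exact ⟨z n - digitBound k n, by omega⟩
        · rintro ⟨j, hj⟩; omega
      rw [he]
      exact measure_iUnion_null fun j => h1 n _ (by omega)
    refine measure_mono_null ?_ (measure_iUnion_null h2)
    intro z hz
    simp only [tGood, Set.mem_compl_iff, Set.mem_setOf_eq, not_forall, not_lt] at hz
    obtain ⟨n, hn⟩ := hz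
    exact Set.mem_iUnion.mpr ⟨n, hn⟩
  -- measure of a prefix cylinder
  have hcylm : ∀ m : ℕ, ∀ a : ℕ → ℕ, μ (tCyl m a)
      = ∏ n ∈ Finset.range m,
          (if a n < digitBound k n then (1 : ENNReal) / digitBound k n else 0) := by
    intro m a
    have h := hcyl (Finset.range m) a
    rw [show {z : ℕ → ℕ | ∀ n ∈ Finset.range m, z n = a n} = tCyl m a by
      ext z; simp [tCyl]] at h
    exact h
  have hmeas : Measurable (twistedOdometer k) := tS_meas k
  refine ⟨hmeas, ?_⟩
  have hprob : IsProbabilityMeasure (Measure.map (twistedOdometer k) μ) :=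
    Measure.isProbabilityMeasure_map hmeas.aemeasurable
  refine MeasureTheory.ext_of_generate_finite _ tCyl_generate tCyl_pi ?_ ?_
  · rintro s ⟨m, a, rfl⟩
    rw [Measure.map_apply hmeas (tCyl_measurable m a)]
    -- main computation
    rcases Nat.eq_zero_or_pos m with rfl | hm
    · have hu : tCyl 0 a = Set.univ := by ext z; simp [tCyl]
      rw [hu]; simp
    by_cases hval : ∀ n < m, a n < digitBound k n
    · obtain ⟨a', hval', hiff⟩ := tS_key hk hm hval
      have hinter : twistedOdometer k ⁻¹' tCyl m a ∩ tGood k = tCyl m a' ∩ tGood k := by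
        ext z
        simp only [Set.mem_inter_iff, Set.mem_preimage, mem_tCyl]
        constructor
        · rintro ⟨hz, hG⟩; exact ⟨(hiff z hG).mp hz, hG⟩
        · rintro ⟨hz, hG⟩; exact ⟨(hiff z hG).mpr hz, hG⟩
      calc μ (twistedOdometer k ⁻¹' tCyl m a)
          = μ (twistedOdometer k ⁻¹' tCyl m a ∩ tGood k) :=
            (measure_inter_conull hGnull).symm
        _ = μ (tCyl m a' ∩ tGood k) := by rw [hinter]
        _ = μ (tCyl m a') := measure_inter_conull hGnull
        _ = ∏ n ∈ Finset.range m, (1 : ENNReal) / digitBound k n := by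
            rw [hcylm]
            exact Finset.prod_congr rfl fun n hn =>
              if_pos (hval' n (Finset.mem_range.mp hn))
        _ = μ (tCyl m a) := by
            rw [hcylm]
            exact (Finset.prod_congr rfl fun n hn =>
              if_pos (hval n (Finset.mem_range.mp hn))).symm
    · push_neg at hval
      obtain ⟨n, hn, hle⟩ := hval
      have hr : μ (tCyl m a) = 0 := by
        rw [hcylm]
        exact Finset.prod_eq_zero (Finset.mem_range.mpr hn) (if_neg (by omega))
      have hl : μ (twistedOdometer k ⁻¹' tCyl m a) = 0 := by
        refine measure_mono_null ?_ hGnull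
        intro z hz
        simp only [Set.mem_preimage, mem_tCyl] at hz
        simp only [Set.mem_compl_iff]
        intro hG
        have hb := tS_good hk hG n
        rw [hz n hn] at hb
        omega
      rw [hl, hr]
  · simp
end

section
/- Let ε_0 > 0, (λ_n) positive reals and (l_n) positive integers with l_1 = 1, satisfying −log λ_n + 2·Σ_{i=1}^{n−1} l_i·log λ_i > ε_0 for all n (note log λ_i < 0 when λ_i < 1). Then the set of values {Σ_{i=1}^{m} c_i·log λ_i : m ∈ ℕ, c_i ∈ ℤ, |c_i| ≤ 2l_i} ∩ (0, ∞) is bounded below by a positive constant, i.e., every positive element of this set is ≥ ε_0 — equivalently, the log Radon–Nikodym cocycle values of the product measure ⊗(ν_{λ_n})^{⊗2l_n} under the tail equivalence relation form a lacunary set (no values in (0, ε_0)). -/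
open Finset Real

theorem lacunary_cocycle_values
    (eps0 : ℝ) (heps0 : 0 < eps0)
    (lam : ℕ → ℝ) (l : ℕ → ℕ)
    (hlam : ∀ n, 1 ≤ n → 0 < lam n ∧ lam n < 1)
    (hl : ∀ n, 1 ≤ n → 1 ≤ l n) (hl1 : l 1 = 1)
    (hlac : ∀ n, 1 ≤ n →
      -Real.log (lam n) + 2 * ∑ i ∈ Finset.Ico 1 n, (l i : ℝ) * Real.log (lam i) > eps0) :
    ∀ (m : ℕ) (c : ℕ → ℤ), (∀ i, |c i| ≤ 2 * (l i : ℤ)) →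
      0 < ∑ i ∈ Finset.Icc 1 m, (c i : ℝ) * Real.log (lam i) →
      eps0 ≤ ∑ i ∈ Finset.Icc 1 m, (c i : ℝ) * Real.log (lam i) := by
  intro m
  induction m with
  | zero =>
    intro c hc hpos
    simp at hpos
  | succ m ih =>
    intro c hc hpos
    have hlog : ∀ i ∈ Finset.Icc 1 (m + 1), Real.log (lam i) < 0 := by
      intro i hi
      rw [Finset.mem_Icc] at hi
      exact Real.log_neg (hlam i hi.1).1 (hlam i hi.1).2
    have hsplit : ∑ i ∈ Finset.Icc 1 (m + 1), (c i : ℝ) * Real.log (lam i)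
        = (∑ i ∈ Finset.Icc 1 m, (c i : ℝ) * Real.log (lam i))
          + (c (m + 1) : ℝ) * Real.log (lam (m + 1)) :=
      Finset.sum_Icc_succ_top (by omega) _
    by_cases hc0 : c (m + 1) = 0
    · rw [hsplit, hc0] at hpos ⊢
      simp only [Int.cast_zero, zero_mul, add_zero] at hpos ⊢
      exact ih c hc hpos
    · have hbd : ∀ i, (-(2 * (l i : ℝ)) ≤ (c i : ℝ)) ∧ ((c i : ℝ) ≤ 2 * (l i : ℝ)) := by
        intro i
        have h := abs_le.mp (hc i)
        constructor
        · have : (-(2 * (l i : ℤ)) : ℤ) ≤ c i := h.1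
          exact_mod_cast this
        · exact_mod_cast h.2
      have hupper : ∑ i ∈ Finset.Icc 1 m, (c i : ℝ) * Real.log (lam i)
          ≤ -(2 * ∑ i ∈ Finset.Icc 1 m, (l i : ℝ) * Real.log (lam i)) := by
        have heq : -(2 * ∑ i ∈ Finset.Icc 1 m, (l i : ℝ) * Real.log (lam i))
            = ∑ i ∈ Finset.Icc 1 m, (-(2 * (l i : ℝ))) * Real.log (lam i) := by
          rw [Finset.mul_sum, ← Finset.sum_neg_distrib]
          exact Finset.sum_congr rfl fun i _ => by ring
        rw [heq]
        apply Finset.sum_le_sum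
        intro i hi
        obtain ⟨hi1, hi2⟩ := Finset.mem_Icc.mp hi
        have hlogi : Real.log (lam i) < 0 :=
          hlog i (Finset.mem_Icc.mpr ⟨hi1, by omega⟩)
        exact mul_le_mul_of_nonpos_right (hbd i).1 hlogi.le
      have hlower : 2 * ∑ i ∈ Finset.Icc 1 m, (l i : ℝ) * Real.log (lam i)
          ≤ ∑ i ∈ Finset.Icc 1 m, (c i : ℝ) * Real.log (lam i) := by
        rw [Finset.mul_sum]
        apply Finset.sum_le_sum
        intro i hi
        obtain ⟨hi1, hi2⟩ := Finset.mem_Icc.mp hi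
        have hlogi : Real.log (lam i) < 0 :=
          hlog i (Finset.mem_Icc.mpr ⟨hi1, by omega⟩)
        have h2 : (c i : ℝ) ≤ 2 * (l i : ℝ) := (hbd i).2
        have := mul_le_mul_of_nonpos_right h2 hlogi.le
        linarith
      have hlogn : Real.log (lam (m + 1)) < 0 :=
        hlog (m + 1) (Finset.mem_Icc.mpr ⟨by omega, le_refl _⟩)
      have hlacn := hlac (m + 1) (by omega)
      rw [show Finset.Ico 1 (m + 1) = Finset.Icc 1 m from Finset.Ico_add_one_right_eq_Icc 1 m] at hlacn
      rcases lt_or_gt_of_ne hc0 with hneg | hposc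
      · -- c(m+1) ≤ -1 : sum ≥ -log λ + 2Σ > ε0
        have h1 : (c (m + 1) : ℝ) ≤ -1 := by exact_mod_cast (by omega : c (m + 1) ≤ -1)
        have hkey := mul_le_mul_of_nonpos_right h1 hlogn.le
        rw [hsplit]
        linarith
      · have h1 : (1 : ℝ) ≤ (c (m + 1) : ℝ) := by exact_mod_cast (by omega : (1:ℤ) ≤ c (m + 1))
        exfalso
        have hkey := mul_le_mul_of_nonpos_right h1 hlogn.le
        rw [hsplit] at hpos
        linarith
end

section
/- Let ε = e^{2πi/3}. For positive integers l_{n+1},...,l_m and reals λ_i ∈ (0,1), the ℓ¹-coefficient norm of the real polynomial ∏_{i=n+1}^{m} (1/(1+λ_i) + ε·λ_i/(1+λ_i)·X_i)^{l_i}·(1/(1+λ_i) + ε̄·λ_i/(1+λ_i)·X_i)^{l_i} equals ∏_{i=n+1}^{m} (1 − λ_i/(1+λ_i)²)^{l_i}; in particular it is at most ∏_{i=n+1}^{m} (1 − λ_i/(1+λ_i)²)^{l_i}. -/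
/-!
Since `ε + ε̄ = -1` and `ε ε̄ = 1`, the product of the two conjugate linear factors in `Xᵢ` is the
real quadratic `(1 - λ Xᵢ + λ² Xᵢ²) / (1 + λ)²`, whose coefficients alternate in sign with the
degree. Polynomials with this sign pattern are closed under sums and products, and for such a
polynomial the sum of the absolute values of the coefficients is its value at `(-1, …, -1)`, which
factors as `∏ (1 - λᵢ / (1 + λᵢ)²) ^ lᵢ`.
-/

open Finset MvPolynomial

noncomputable def eps : ℂ := Complex.exp (2 * Real.pi * Complex.I / 3)

/-- The product `∏_{i=n+1}^m (1/(1+λᵢ) + ε λᵢ Xᵢ/(1+λᵢ))^{lᵢ} (1/(1+λᵢ) + ε̄ λᵢ Xᵢ/(1+λᵢ))^{lᵢ}`. -/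
noncomputable def conjProd (n m : ℕ) (lam : ℕ → ℝ) (l : ℕ → ℕ) : MvPolynomial ℕ ℂ :=
  ∏ i ∈ Finset.Ioc n m,
    ((C ((1 : ℂ) / (1 + (lam i : ℂ))) + C (eps * (lam i : ℂ) / (1 + (lam i : ℂ))) * X i) ^ l i *
     (C ((1 : ℂ) / (1 + (lam i : ℂ))) +
       C ((starRingEnd ℂ) eps * (lam i : ℂ) / (1 + (lam i : ℂ))) * X i) ^ l i)

namespace MvPolynomial

section PartialOrder

variable (σ R : Type*) [CommRing R] [PartialOrder R] [IsOrderedRing R]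

/-- Polynomials `p` such that `p(-X)` has nonnegative coefficients. -/
def alternatingSubsemiring : Subsemiring (MvPolynomial σ R) where
  carrier := {p | ∀ s, 0 ≤ (-1) ^ s.degree * coeff s p}
  zero_mem' s := by simp
  one_mem' s := by
    classical
    rw [coeff_one]
    split_ifs with h
    · simp [← h]
    · simp
  add_mem' {p q} hp hq s := by
    rw [coeff_add, mul_add]
    exact add_nonneg (hp s) (hq s)
  mul_mem' {p q} hp hq s := by
    classical
    rw [coeff_mul, mul_sum]
    refine sum_nonneg fun x hx => ?_
    rw [← mem_antidiagonal.mp hx, map_add, pow_add]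
    convert mul_nonneg (hp x.1) (hq x.2) using 1
    ring

variable {σ R}

theorem monomial_mem_alternatingSubsemiring {s : σ →₀ ℕ} {a : R}
    (h : 0 ≤ (-1) ^ s.degree * a) : monomial s a ∈ alternatingSubsemiring σ R := by
  classical
  intro t
  rw [coeff_monomial]
  split_ifs with hst
  · rwa [← hst]
  · simp

end PartialOrder

theorem sum_abs_coeff_eq_eval_neg_one {σ R : Type*} [CommRing R] [LinearOrder R]
    [IsOrderedRing R] {p : MvPolynomial σ R} (hp : p ∈ alternatingSubsemiring σ R) :
    ∑ s ∈ p.support, |coeff s p| = eval (fun _ => -1) p := by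
  rw [eval_eq]
  refine sum_congr rfl fun s _ => ?_
  rw [prod_pow_eq_pow_sum, ← Finsupp.degree_apply, mul_comm,
    ← abs_of_nonneg (hp s), abs_mul, abs_pow, abs_neg, abs_one, one_pow, one_mul]

theorem sum_norm_coeff_map_algebraMap {σ A : Type*} [NormedCommRing A] [NormedAlgebra ℝ A]
    [NormOneClass A] (p : MvPolynomial σ ℝ) :
    ∑ s ∈ (map (algebraMap ℝ A) p).support, ‖coeff s (map (algebraMap ℝ A) p)‖ =
      ∑ s ∈ p.support, |coeff s p| := by
  rw [support_map_of_injective _ (algebraMap_isometry ℝ A).injective]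
  simp only [coeff_map, norm_algebraMap', Real.norm_eq_abs]

end MvPolynomial

theorem eps_isPrimitiveRoot : IsPrimitiveRoot eps 3 := by
  have h := Complex.isPrimitiveRoot_exp 3 (by norm_num)
  rwa [Nat.cast_ofNat] at h

theorem conj_eps : starRingEnd ℂ eps = eps⁻¹ := by
  rw [eps, ← Complex.exp_conj, ← Complex.exp_neg]
  simp [map_div₀, map_ofNat, neg_div]

theorem eps_mul_conj_eps : eps * starRingEnd ℂ eps = 1 := by
  rw [conj_eps, mul_inv_cancel₀ (eps_isPrimitiveRoot.ne_zero (by norm_num))]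

theorem eps_add_conj_eps : eps + starRingEnd ℂ eps = -1 := by
  have hsum : ∑ k ∈ range 3, eps ^ k = 0 := eps_isPrimitiveRoot.geom_sum_eq_zero (by norm_num)
  have hinv : eps⁻¹ = eps ^ 2 :=
    inv_eq_of_mul_eq_one_right (by rw [← pow_succ', eps_isPrimitiveRoot.pow_eq_one])
  rw [conj_eps, hinv]
  simp only [sum_range_succ, sum_range_zero] at hsum
  linear_combination hsum

noncomputable def realFactor {σ : Type*} (t : ℝ) (i : σ) : MvPolynomial σ ℝ :=
  C (1 / (1 + t) ^ 2) - C (t / (1 + t) ^ 2) * X i + C (t ^ 2 / (1 + t) ^ 2) * X i ^ 2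

section realFactor

variable {σ : Type*} {t : ℝ}

theorem map_realFactor (ht : 1 + t ≠ 0) (i : σ) :
    map (algebraMap ℝ ℂ) (realFactor t i) =
      (C (1 / (1 + (t : ℂ))) + C (eps * t / (1 + t)) * X i) *
        (C (1 / (1 + (t : ℂ))) + C (starRingEnd ℂ eps * t / (1 + t)) * X i) := by
  have ht' : 1 + (t : ℂ) ≠ 0 := by exact_mod_cast ht
  have e1 : algebraMap ℝ ℂ (1 / (1 + t) ^ 2) = 1 / (1 + t) * (1 / (1 + t)) := by
    simp only [Complex.coe_algebraMap, Complex.ofReal_div, Complex.ofReal_pow, Complex.ofReal_add,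
      Complex.ofReal_one]
    field_simp
  have e2 : algebraMap ℝ ℂ (t / (1 + t) ^ 2) =
      -(1 / (1 + t) * (eps * t / (1 + t) + starRingEnd ℂ eps * t / (1 + t))) := by
    simp only [Complex.coe_algebraMap, Complex.ofReal_div, Complex.ofReal_pow, Complex.ofReal_add,
      Complex.ofReal_one]
    field_simp
    linear_combination (t : ℂ) * eps_add_conj_eps
  have e3 : algebraMap ℝ ℂ (t ^ 2 / (1 + t) ^ 2) =
      eps * t / (1 + t) * (starRingEnd ℂ eps * t / (1 + t)) := by
    simp only [Complex.coe_algebraMap, Complex.ofReal_div, Complex.ofReal_pow, Complex.ofReal_add,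
      Complex.ofReal_one]
    field_simp
    linear_combination (-(t : ℂ) ^ 2) * eps_mul_conj_eps
  simp only [realFactor, map_sub, map_add, map_mul, map_pow, map_C, map_X]
  rw [e1, e2, e3]
  simp only [map_mul, map_add, map_neg]
  ring

theorem realFactor_mem_alternatingSubsemiring (ht : 0 ≤ t) (i : σ) :
    realFactor t i ∈ alternatingSubsemiring σ ℝ := by
  rw [realFactor, sub_eq_add_neg, ← neg_mul, ← C_neg, C_mul_X_eq_monomial,
    C_mul_X_pow_eq_monomial, C_apply]
  refine add_mem (add_mem ?_ ?_) ?_ <;> apply monomial_mem_alternatingSubsemiring <;>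
    simp <;> positivity

theorem eval_neg_one_realFactor (ht : 1 + t ≠ 0) (i : σ) :
    eval (fun _ => -1) (realFactor t i) = 1 - t / (1 + t) ^ 2 := by
  simp only [realFactor, map_sub, map_add, map_mul, map_pow, eval_C, eval_X]
  field_simp
  ring

end realFactor

theorem conjProd_eq_map (n m : ℕ) {lam : ℕ → ℝ} (l : ℕ → ℕ) (hlam : ∀ i, 1 + lam i ≠ 0) :
    conjProd n m lam l = map (algebraMap ℝ ℂ) (∏ i ∈ Ioc n m, realFactor (lam i) i ^ l i) := by
  simp only [conjProd, map_prod, map_pow, map_realFactor (hlam _), mul_pow]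

theorem l1_norm_of_conjugate_product_general
    (n m : ℕ) (lam : ℕ → ℝ) (l : ℕ → ℕ)
    (hlam : ∀ i, 0 < lam i ∧ lam i < 1) :
    (∑ s ∈ (conjProd n m lam l).support, ‖(conjProd n m lam l).coeff s‖)
      = ∏ i ∈ Finset.Ioc n m, (1 - lam i / (1 + lam i) ^ 2) ^ l i ∧
    (∑ s ∈ (conjProd n m lam l).support, ‖(conjProd n m lam l).coeff s‖)
      ≤ ∏ i ∈ Finset.Ioc n m, (1 - lam i / (1 + lam i) ^ 2) ^ l i := by
  have hnonneg (i : ℕ) : 0 ≤ lam i := (hlam i).1.le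
  have hne (i : ℕ) : 1 + lam i ≠ 0 := by linarith [hnonneg i]
  have hmem : ∏ i ∈ Ioc n m, realFactor (lam i) i ^ l i ∈ alternatingSubsemiring ℕ ℝ :=
    prod_mem fun i _ => pow_mem (realFactor_mem_alternatingSubsemiring (hnonneg i) i) _
  have key : ∑ s ∈ (conjProd n m lam l).support, ‖(conjProd n m lam l).coeff s‖
      = ∏ i ∈ Ioc n m, (1 - lam i / (1 + lam i) ^ 2) ^ l i := by
    rw [conjProd_eq_map n m l hne, sum_norm_coeff_map_algebraMap,
      sum_abs_coeff_eq_eval_neg_one hmem, map_prod]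
    simp only [map_pow, eval_neg_one_realFactor (hne _)]
  exact ⟨key, key.le⟩

theorem l1_norm_of_conjugate_product
    (n m : ℕ) (lam : ℕ → ℝ) (l : ℕ → ℕ)
    (hlam : ∀ i, 0 < lam i ∧ lam i < 1) (hl : ∀ i, 1 ≤ l i) :
    (∑ s ∈ (conjProd n m lam l).support, ‖(conjProd n m lam l).coeff s‖)
      = ∏ i ∈ Finset.Ioc n m, (1 - lam i / (1 + lam i) ^ 2) ^ l i ∧
    (∑ s ∈ (conjProd n m lam l).support, ‖(conjProd n m lam l).coeff s‖)
      ≤ ∏ i ∈ Finset.Ioc n m, (1 - lam i / (1 + lam i) ^ 2) ^ l i :=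
  l1_norm_of_conjugate_product_general n m lam l hlam
end

section
/- Filtered Vandermonde convergence: let λ_i ∈ (0,1), l_i positive integers with Σ_{i>n} l_i λ_i = ∞. For tuples p = (p_{n+1},...,p_m) with 0 ≤ p_i ≤ 2l_i and Σp_i ≡ 0 (mod 3), set D_m(p) = |3·Σ_{j,k: j_i+k_i=p_i, Σj≡0, Σk≡0 (mod 3)} ∏_i C(l_i,j_i)C(l_i,k_i) − ∏_i C(2l_i,p_i)|·∏_i λ_i^{p_i}/(1+λ_i)^{2l_i}. Then Σ_{p} D_m(p) → 0 as m → ∞. -/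
open Finset Filter Polynomial

/-!
Let `ω` be a primitive cube root of unity and, for `ζ ∈ ℂ`,
`A(ζ) = ∏ᵢ [X^{pᵢ}] (1 + ζX)^{lᵢ} (1 + X)^{lᵢ}`. The filter `∑_{t<3} ω^{ts} = 3·[3 ∣ s]`, applied to
`s = ∑ jᵢ`, gives `3 · (filtered sum) = A(1) + A(ω) + A(ω²)`; the condition on `∑ kᵢ` comes for free
since `∑ jᵢ + ∑ kᵢ = ∑ pᵢ ≡ 0`. Vandermonde gives `A(1) = ∏ C(2lᵢ, pᵢ)`, and for `ζ = ω, ω²` we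
have `|ζ| = |1 + ζ| = 1`, so the coefficients of `((1 + ζX)(1 + X))^l` are dominated by those of
`(1 + X + X²)^l`. Weighting by `λ^p / (1 + λ)^{2l}` and summing over all `p`, the total defect is
at most `2 ∏ᵢ ((1 + λᵢ + λᵢ²)/(1 + λᵢ)²)^{lᵢ} = 2 ∏ᵢ (1 - λᵢ/(1 + λᵢ)²)^{lᵢ} ≤ 2 exp(-∑ lᵢλᵢ/4)`.
-/

section CoeffMajorant

variable {R : Type*} [SeminormedRing R]

theorem Polynomial.norm_coeff_mul_le {P P' : R[X]} {Q Q' : ℝ[X]}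
    (h : ∀ i, ‖P.coeff i‖ ≤ Q.coeff i) (h' : ∀ i, ‖P'.coeff i‖ ≤ Q'.coeff i) (q : ℕ) :
    ‖(P * P').coeff q‖ ≤ (Q * Q').coeff q := by
  simp only [coeff_mul]
  refine (norm_sum_le _ _).trans (sum_le_sum fun x _ => (norm_mul_le _ _).trans ?_)
  exact mul_le_mul (h _) (h' _) (norm_nonneg _) ((norm_nonneg _).trans (h _))

theorem Polynomial.norm_coeff_pow_le [NormOneClass R] {P : R[X]} {Q : ℝ[X]}
    (h : ∀ i, ‖P.coeff i‖ ≤ Q.coeff i) (l q : ℕ) : ‖(P ^ l).coeff q‖ ≤ (Q ^ l).coeff q := by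
  induction l generalizing q with
  | zero => by_cases hq : q = 0 <;> simp [coeff_one, hq]
  | succ l ih => rw [pow_succ, pow_succ]; exact norm_coeff_mul_le ih h q

end CoeffMajorant

namespace IsPrimitiveRoot

theorem sum_range_pow_mul_eq_ite {R : Type*} [CommRing R] [IsDomain R] {ζ : R} {k : ℕ}
    (hζ : IsPrimitiveRoot ζ k) (s : ℕ) :
    ∑ t ∈ range k, ζ ^ (t * s) = if k ∣ s then (k : R) else 0 := by
  simp_rw [mul_comm _ s, pow_mul]
  split_ifs with hks
  · simp [(hζ.pow_eq_one_iff_dvd s).2 hks]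
  · have hne : ζ ^ s ≠ 1 := fun h => hks ((hζ.pow_eq_one_iff_dvd s).1 h)
    refine eq_zero_of_ne_zero_of_mul_left_eq_zero (sub_ne_zero_of_ne hne.symm) ?_
    rw [mul_neg_geom_sum, ← pow_mul, mul_comm, pow_mul, hζ.pow_eq_one, one_pow, sub_self]

theorem norm_one_add_eq_one {ζ : ℂ} (hζ : IsPrimitiveRoot ζ 3) : ‖1 + ζ‖ = 1 := by
  have hsum : 1 + ζ + ζ ^ 2 = 0 := by
    simpa [sum_range_succ] using hζ.geom_sum_eq_zero (by norm_num)
  rw [show 1 + ζ = -ζ ^ 2 by linear_combination hsum, norm_neg, norm_pow,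
    hζ.norm'_eq_one (by norm_num), one_pow]

end IsPrimitiveRoot

theorem Polynomial.one_add_C_mul_X_pow_eq_sum {R : Type*} [CommSemiring R] (a : R) (l : ℕ) :
    (1 + C a * X) ^ l = ∑ i ∈ range (l + 1), C (a ^ i * l.choose i) * X ^ i := by
  rw [add_comm, add_pow]
  refine sum_congr rfl fun i _ => ?_
  simp only [one_pow, mul_one, mul_pow, C_mul, C_pow, map_natCast]
  ring

theorem Polynomial.coeff_one_add_C_mul_X_pow_mul_one_add_X_pow {R : Type*} [CommSemiring R]
    (ζ : R) (l q : ℕ) :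
    ((1 + C ζ * X) ^ l * (1 + X) ^ l).coeff q =
      ∑ a ∈ range (l + 1), ∑ b ∈ range (l + 1),
        if a + b = q then ζ ^ a * ((l.choose a * l.choose b : ℕ) : R) else 0 := by
  have h1 : (1 + X : R[X]) ^ l = ∑ i ∈ range (l + 1), C (1 ^ i * (l.choose i : R)) * X ^ i := by
    simpa using one_add_C_mul_X_pow_eq_sum (1 : R) l
  rw [one_add_C_mul_X_pow_eq_sum, h1, sum_mul_sum]
  simp only [finsetSum_coeff]
  refine sum_congr rfl fun a _ => sum_congr rfl fun b _ => ?_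
  rw [show C (ζ ^ a * (l.choose a : R)) * X ^ a * (C (1 ^ b * (l.choose b : R)) * X ^ b)
      = C (ζ ^ a * ((l.choose a * l.choose b : ℕ) : R)) * X ^ (a + b) by
    simp only [one_pow, one_mul, Nat.cast_mul, C_mul, pow_add]; ring]
  rw [coeff_C_mul_X_pow]
  simp only [eq_comm (a := q)]

theorem norm_coeff_one_add_C_mul_X_pow_mul_one_add_X_pow_le {ζ : ℂ} (hζ : IsPrimitiveRoot ζ 3)
    (l q : ℕ) :
    ‖((1 + C ζ * X) ^ l * (1 + X) ^ l).coeff q‖ ≤ ((1 + X + X ^ 2 : ℝ[X]) ^ l).coeff q := by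
  rw [← mul_pow]
  refine norm_coeff_pow_le (fun i => ?_) l q
  rw [show (1 + C ζ * X) * (1 + X) = C 1 + C (1 + ζ) * X + C ζ * X ^ 2 by
    simp only [C_1, C_add]; ring]
  rcases i with _ | _ | _ | i <;>
    simp [coeff_X, coeff_C, coeff_one, coeff_X_pow, hζ.norm_one_add_eq_one, hζ.norm'_eq_one]

theorem coeff_one_add_X_add_X_sq_pow_nonneg (l q : ℕ) :
    0 ≤ ((1 + X + X ^ 2 : ℝ[X]) ^ l).coeff q := by
  refine (norm_nonneg _).trans (norm_coeff_pow_le (P := (1 + X + X ^ 2 : ℝ[X])) (fun i => ?_) l q)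
  rcases i with _ | _ | _ | i <;> simp [coeff_X, coeff_one, coeff_X_pow]

theorem sum_coeff_one_add_X_add_X_sq_pow_mul_pow (l : ℕ) (x : ℝ) :
    ∑ q ∈ range (2 * l + 1), ((1 + X + X ^ 2 : ℝ[X]) ^ l).coeff q * x ^ q =
      (1 + x + x ^ 2) ^ l := by
  have hdeg : ((1 + X + X ^ 2 : ℝ[X]) ^ l).natDegree < 2 * l + 1 := by
    refine Nat.lt_succ_of_le (natDegree_pow_le.trans ?_)
    rw [mul_comm]
    exact Nat.mul_le_mul_right l (by compute_degree)
  rw [← eval_eq_sum_range' hdeg]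
  simp

theorem one_add_add_sq_div_sq_le_exp {x : ℝ} (hx₀ : 0 ≤ x) (hx₁ : x ≤ 1) :
    (1 + x + x ^ 2) / (1 + x) ^ 2 ≤ Real.exp (-(x / 4)) := by
  refine le_trans ?_ (Real.add_one_le_exp _)
  rw [div_le_iff₀ (by positivity)]
  nlinarith

theorem sum_coeff_mul_pow_div_le_exp (l : ℕ) {x : ℝ} (hx₀ : 0 ≤ x) (hx₁ : x ≤ 1) :
    ∑ q ∈ range (2 * l + 1), ((1 + X + X ^ 2 : ℝ[X]) ^ l).coeff q * (x ^ q / (1 + x) ^ (2 * l))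
      ≤ Real.exp (-(l * x / 4)) := by
  have hsum : ∑ q ∈ range (2 * l + 1),
      ((1 + X + X ^ 2 : ℝ[X]) ^ l).coeff q * (x ^ q / (1 + x) ^ (2 * l))
        = ((1 + x + x ^ 2) / (1 + x) ^ 2) ^ l := by
    rw [div_pow, ← pow_mul, ← sum_coeff_one_add_X_add_X_sq_pow_mul_pow, sum_div]
    simp only [mul_div_assoc]
  rw [hsum, show -(l * x / 4) = l * -(x / 4) by ring, Real.exp_nat_mul]
  exact pow_le_pow_left₀ (by positivity) (one_add_add_sq_div_sq_le_exp hx₀ hx₁) l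

section FilteredVandermonde

variable {ι : Type*} [DecidableEq ι]

theorem Finset.prod_attach_sum_eq_sum_pi {κ M : Type*} [CommSemiring M] (s : Finset ι)
    (t : ι → Finset κ) (F : s → κ → M) :
    ∏ x ∈ s.attach, ∑ b ∈ t x, F x b = ∑ j ∈ s.pi t, ∏ x ∈ s.attach, F x (j x x.2) := by
  classical
  have h := prod_sum s t (fun i b => if h : i ∈ s then F ⟨i, h⟩ b else 0)
  simp only [coe_mem, dite_true] at h
  rw [← h, ← prod_attach s]
  simp

theorem Finset.prod_attach_sum_sum_ite_eq {M : Type*} [CommSemiring M] (s : Finset ι)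
    (t : ι → Finset ℕ) (p : ∀ i ∈ s, ℕ) (f : ι → ℕ → ℕ → M) :
    ∏ x ∈ s.attach, ∑ a ∈ t x, ∑ b ∈ t x, (if a + b = p x x.2 then f x a b else 0) =
      ∑ j ∈ s.pi t, ∑ k ∈ s.pi t,
        if ∀ i (hi : i ∈ s), j i hi + k i hi = p i hi then
          ∏ x ∈ s.attach, f x (j x x.2) (k x x.2) else 0 := by
  simp_rw [prod_attach_sum_eq_sum_pi s t, prod_ite_zero]
  simp

noncomputable def filteredVandermonde (s : Finset ι) (l : ι → ℕ) (p : ∀ i ∈ s, ℕ) : ℝ :=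
  ∑ j ∈ s.pi (fun i => range (l i + 1)), ∑ k ∈ s.pi (fun i => range (l i + 1)),
    if (∀ i (hi : i ∈ s), j i hi + k i hi = p i hi) ∧
        (∑ i ∈ s.attach, j i.1 i.2) % 3 = 0 ∧ (∑ i ∈ s.attach, k i.1 i.2) % 3 = 0 then
      ((∏ i ∈ s.attach, (l i.1).choose (j i.1 i.2) * (l i.1).choose (k i.1 i.2) : ℕ) : ℝ)
    else 0

theorem prod_coeff_eq_sum_pi_sum_pi {R : Type*} [CommSemiring R] (ζ : R) (s : Finset ι)
    (l : ι → ℕ) (p : ∀ i ∈ s, ℕ) :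
    ∏ x ∈ s.attach, ((1 + C ζ * X) ^ l x * (1 + X) ^ l x).coeff (p x x.2) =
      ∑ j ∈ s.pi (fun i => range (l i + 1)), ∑ k ∈ s.pi (fun i => range (l i + 1)),
        if ∀ i (hi : i ∈ s), j i hi + k i hi = p i hi then
          ζ ^ (∑ i ∈ s.attach, j i.1 i.2) *
            ((∏ i ∈ s.attach, (l i.1).choose (j i.1 i.2) * (l i.1).choose (k i.1 i.2) : ℕ) : R)
        else 0 := by
  simp only [coeff_one_add_C_mul_X_pow_mul_one_add_X_pow]
  rw [prod_attach_sum_sum_ite_eq s (fun i => range (l i + 1)) p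
    (fun i a b => ζ ^ a * ((l i).choose a * (l i).choose b : ℕ))]
  simp only [prod_mul_distrib, prod_pow_eq_pow_sum, Nat.cast_prod, Nat.cast_mul]

theorem three_mul_filteredVandermonde {ω : ℂ} (hω : IsPrimitiveRoot ω 3) (s : Finset ι)
    (l : ι → ℕ) (p : ∀ i ∈ s, ℕ) (hp : (∑ i ∈ s.attach, p i.1 i.2) % 3 = 0) :
    3 * (filteredVandermonde s l p : ℂ) = ∑ t ∈ range 3,
      ∏ x ∈ s.attach, ((1 + C (ω ^ t) * X) ^ l x * (1 + X) ^ l x).coeff (p x x.2) := by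
  simp_rw [prod_coeff_eq_sum_pi_sum_pi]
  rw [filteredVandermonde, Complex.ofReal_sum, mul_sum, sum_comm]
  refine sum_congr rfl fun j _ => ?_
  rw [Complex.ofReal_sum, mul_sum, sum_comm]
  refine sum_congr rfl fun k _ => ?_
  by_cases hc : ∀ i (hi : i ∈ s), j i hi + k i hi = p i hi
  · have hjk : (∑ i ∈ s.attach, j i.1 i.2) + ∑ i ∈ s.attach, k i.1 i.2 =
        ∑ i ∈ s.attach, p i.1 i.2 := by
      rw [← sum_add_distrib]; exact sum_congr rfl fun i _ => hc i.1 i.2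
    have hk : (∑ i ∈ s.attach, k i.1 i.2) % 3 = 0 ↔ (∑ i ∈ s.attach, j i.1 i.2) % 3 = 0 := by
      omega
    simp only [if_pos hc, ← sum_mul, ← pow_mul]
    rw [hω.sum_range_pow_mul_eq_ite]
    by_cases hj : 3 ∣ ∑ i ∈ s.attach, j i.1 i.2
    · have hj' := Nat.mod_eq_zero_of_dvd hj
      rw [if_pos ⟨hc, hj', hk.2 hj'⟩, if_pos hj]
      push_cast
      ring
    · rw [if_neg (fun h => hj (Nat.dvd_of_mod_eq_zero h.2.1)), if_neg hj]
      simp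
  · simp only [if_neg hc, if_neg (fun h : _ ∧ _ => hc h.1), sum_const_zero, Complex.ofReal_zero,
      mul_zero]

theorem abs_three_mul_filteredVandermonde_sub_le (s : Finset ι) (l : ι → ℕ) (p : ∀ i ∈ s, ℕ)
    (hp : (∑ i ∈ s.attach, p i.1 i.2) % 3 = 0) :
    |3 * filteredVandermonde s l p - ((∏ i ∈ s.attach, (2 * l i.1).choose (p i.1 i.2) : ℕ) : ℝ)|
      ≤ 2 * ∏ x ∈ s.attach, ((1 + X + X ^ 2 : ℝ[X]) ^ l x).coeff (p x x.2) := by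
  set A : ℂ → ℂ := fun ζ => ∏ x ∈ s.attach, ((1 + C ζ * X) ^ l x * (1 + X) ^ l x).coeff (p x x.2)
  have hA : ∀ ζ : ℂ, IsPrimitiveRoot ζ 3 →
      ‖A ζ‖ ≤ ∏ x ∈ s.attach, ((1 + X + X ^ 2 : ℝ[X]) ^ l x).coeff (p x x.2) := fun ζ hζ => by
    rw [norm_prod]
    exact prod_le_prod (fun _ _ => norm_nonneg _)
      fun x _ => norm_coeff_one_add_C_mul_X_pow_mul_one_add_X_pow_le hζ _ _
  have hA₁ : A 1 = ((∏ i ∈ s.attach, (2 * l i.1).choose (p i.1 i.2) : ℕ) : ℂ) := by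
    simp only [A, C_1, one_mul, ← pow_add, ← two_mul, coeff_one_add_X_pow, Nat.cast_prod]
  obtain ⟨ω, hω⟩ : ∃ ω : ℂ, IsPrimitiveRoot ω 3 :=
    ⟨_, Complex.isPrimitiveRoot_exp 3 (by norm_num)⟩
  have hsplit := three_mul_filteredVandermonde hω s l p hp
  rw [sum_range_succ, sum_range_succ, sum_range_one, pow_zero, pow_one] at hsplit
  have hdefect : ((3 * filteredVandermonde s l p -
      ((∏ i ∈ s.attach, (2 * l i.1).choose (p i.1 i.2) : ℕ) : ℝ) : ℝ) : ℂ) = A ω + A (ω ^ 2) := by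
    push_cast
    rw [← Nat.cast_prod, ← hA₁]
    linear_combination hsplit
  rw [← Real.norm_eq_abs, ← Complex.norm_real, hdefect, two_mul]
  exact (norm_add_le _ _).trans
    (add_le_add (hA ω hω) (hA _ (hω.pow_of_coprime 2 (by norm_num))))

theorem sum_filteredVandermonde_defect_le (s : Finset ι) (l : ι → ℕ) (lam : ι → ℝ)
    (hlam₀ : ∀ i ∈ s, 0 ≤ lam i) (hlam₁ : ∀ i ∈ s, lam i ≤ 1) :
    ∑ p ∈ s.pi (fun i => range (2 * l i + 1)),
      (if (∑ i ∈ s.attach, p i.1 i.2) % 3 = 0 then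
        |3 * filteredVandermonde s l p -
            ((∏ i ∈ s.attach, (2 * l i.1).choose (p i.1 i.2) : ℕ) : ℝ)| *
          ∏ i ∈ s.attach, lam i.1 ^ (p i.1 i.2) / (1 + lam i.1) ^ (2 * l i.1)
      else 0)
      ≤ 2 * Real.exp (-(∑ i ∈ s, l i * lam i) / 4) := by
  set w : ι → ℕ → ℝ := fun i q => ((1 + X + X ^ 2 : ℝ[X]) ^ l i).coeff q *
    (lam i ^ q / (1 + lam i) ^ (2 * l i))
  have hweight : ∀ x : s, ∀ q, 0 ≤ lam x ^ q / (1 + lam x) ^ (2 * l x) := fun x q =>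
    div_nonneg (pow_nonneg (hlam₀ x x.2) _) (pow_nonneg (by linarith [hlam₀ x x.2]) _)
  have hw : ∀ x : s, ∀ q, 0 ≤ w x q := fun x q =>
    mul_nonneg (coeff_one_add_X_add_X_sq_pow_nonneg _ _) (hweight x q)
  calc _ ≤ ∑ p ∈ s.pi (fun i => range (2 * l i + 1)), 2 * ∏ x ∈ s.attach, w x (p x x.2) := by
        refine sum_le_sum fun p _ => ?_
        split_ifs with hp
        · rw [prod_mul_distrib, ← mul_assoc]
          exact mul_le_mul_of_nonneg_right (abs_three_mul_filteredVandermonde_sub_le s l p hp)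
            (prod_nonneg fun x _ => hweight x _)
        · exact mul_nonneg zero_le_two (prod_nonneg fun x _ => hw x _)
    _ = 2 * ∏ x ∈ s.attach, ∑ q ∈ range (2 * l x + 1), w x q := by
        rw [← mul_sum, prod_attach_sum_eq_sum_pi s (fun i => range (2 * l i + 1))]
    _ ≤ 2 * ∏ x ∈ s.attach, Real.exp (-(l x * lam x / 4)) := by
        refine mul_le_mul_of_nonneg_left (prod_le_prod (fun x _ => sum_nonneg fun q _ => hw x q)
          fun x _ => sum_coeff_mul_pow_div_le_exp _ (hlam₀ x x.2) (hlam₁ x x.2)) zero_le_two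
    _ = 2 * Real.exp (-(∑ i ∈ s, l i * lam i) / 4) := by
        rw [← Real.exp_sum, sum_attach s (fun i => -((l i : ℝ) * lam i / 4)), sum_neg_distrib,
          ← sum_div, neg_div]

end FilteredVandermonde

open Classical in
theorem filtered_vandermonde_convergence_general
    (n : ℕ) (lam : ℕ → ℝ) (l : ℕ → ℕ)
    (hlam : ∀ i, 0 < lam i ∧ lam i < 1)
    (hdiv : Tendsto (fun m => ∑ i ∈ Finset.Ioc n m, (l i : ℝ) * lam i) atTop atTop) :
    Tendsto (fun m =>
      ∑ p ∈ (Finset.Ioc n m).pi (fun i => Finset.range (2 * l i + 1)),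
        if (∑ i ∈ (Finset.Ioc n m).attach, p i.1 i.2) % 3 = 0 then
          |3 * (∑ j ∈ (Finset.Ioc n m).pi (fun i => Finset.range (l i + 1)),
                ∑ k ∈ (Finset.Ioc n m).pi (fun i => Finset.range (l i + 1)),
                  if (∀ i (hi : i ∈ Finset.Ioc n m), j i hi + k i hi = p i hi) ∧
                      (∑ i ∈ (Finset.Ioc n m).attach, j i.1 i.2) % 3 = 0 ∧
                      (∑ i ∈ (Finset.Ioc n m).attach, k i.1 i.2) % 3 = 0 then
                    ((∏ i ∈ (Finset.Ioc n m).attach,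
                      (l i.1).choose (j i.1 i.2) * (l i.1).choose (k i.1 i.2) : ℕ) : ℝ)
                  else 0)
            - ((∏ i ∈ (Finset.Ioc n m).attach, (2 * l i.1).choose (p i.1 i.2) : ℕ) : ℝ)|
          * ∏ i ∈ (Finset.Ioc n m).attach,
              lam i.1 ^ (p i.1 i.2) / (1 + lam i.1) ^ (2 * l i.1)
        else 0) atTop (nhds 0) := by
  have hexp : Tendsto (fun m => 2 * Real.exp (-(∑ i ∈ Ioc n m, (l i : ℝ) * lam i) / 4))
      atTop (nhds 0) := by
    simpa [neg_div] using ((Real.tendsto_exp_atBot.comp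
      (tendsto_neg_atTop_atBot.comp (hdiv.atTop_div_const four_pos))).const_mul 2)
  refine squeeze_zero (fun m => sum_nonneg fun p _ => ?_)
    (fun m => sum_filteredVandermonde_defect_le (Ioc n m) l lam
      (fun i _ => (hlam i).1.le) (fun i _ => (hlam i).2.le)) hexp
  split_ifs
  · exact mul_nonneg (abs_nonneg _) (prod_nonneg fun i _ =>
      div_nonneg (pow_nonneg (hlam i).1.le _) (pow_nonneg (by linarith [(hlam i.1).1]) _))
  · exact le_rfl

open Classical in
theorem filtered_vandermonde_convergence
    (n : ℕ) (lam : ℕ → ℝ) (l : ℕ → ℕ)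
    (hlam : ∀ i, 0 < lam i ∧ lam i < 1) (hl : ∀ i, 1 ≤ l i)
    (hdiv : Tendsto (fun m => ∑ i ∈ Finset.Ioc n m, (l i : ℝ) * lam i) atTop atTop) :
    Tendsto (fun m =>
      ∑ p ∈ (Finset.Ioc n m).pi (fun i => Finset.range (2 * l i + 1)),
        if (∑ i ∈ (Finset.Ioc n m).attach, p i.1 i.2) % 3 = 0 then
          |3 * (∑ j ∈ (Finset.Ioc n m).pi (fun i => Finset.range (l i + 1)),
                ∑ k ∈ (Finset.Ioc n m).pi (fun i => Finset.range (l i + 1)),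
                  if (∀ i (hi : i ∈ Finset.Ioc n m), j i hi + k i hi = p i hi) ∧
                      (∑ i ∈ (Finset.Ioc n m).attach, j i.1 i.2) % 3 = 0 ∧
                      (∑ i ∈ (Finset.Ioc n m).attach, k i.1 i.2) % 3 = 0 then
                    ((∏ i ∈ (Finset.Ioc n m).attach,
                      (l i.1).choose (j i.1 i.2) * (l i.1).choose (k i.1 i.2) : ℕ) : ℝ)
                  else 0)
            - ((∏ i ∈ (Finset.Ioc n m).attach, (2 * l i.1).choose (p i.1 i.2) : ℕ) : ℝ)|
          * ∏ i ∈ (Finset.Ioc n m).attach,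
              lam i.1 ^ (p i.1 i.2) / (1 + lam i.1) ^ (2 * l i.1)
        else 0) atTop (nhds 0) :=
  filtered_vandermonde_convergence_general n lam l hlam hdiv
end

section
/- Let T be an ergodic measure-preserving automorphism of a standard probability space (Y, ν) that is approximately transitive, and let c > 0. Then the flow built under the constant ceiling function c with base T — i.e., the flow F_s on Y × [0, c) that translates the second coordinate modulo applications of T — is approximately transitive as an ℝ-action. -/
/-!
Step functions `(y, t) ↦ v ⌊t / (c / N)⌋ y`, constant in `t` on the cells of the uniform
partition of `[0, c)` into `N` pieces, are dense in `L¹(ν × Leb|[0,c))` (π-λ argument from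
rectangles `S × [a, b)`). Flowing for time `n c - i c / N` turns `g ⊗ 1_{[0, c/N)}` into
`(g ∘ Tⁿ) ⊗ 1_{i-th cell}`, so approximate transitivity of `T`, applied at once to all the
coefficients `v i` of all the step functions, transfers to the flow.
-/

open MeasureTheory Finset

/-- The flow built under the constant ceiling function `c` over the base
transformation `T`, acting on `Y × [0,c)` (viewed inside `Y × ℝ`). -/
noncomputable def constFlow {Y : Type*} (T : Equiv.Perm Y) (c : ℝ) (s : ℝ) :
    Y × ℝ → Y × ℝ :=
  fun p => ((T ^ ⌊(p.2 + s) / c⌋) p.1, p.2 + s - ⌊(p.2 + s) / c⌋ * c)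

open Filter

/-- Approximate transitivity of a `μ`-preserving action, hence without the Radon–Nikodym factor
of the general definition. -/
def ApproxTransitive {G X : Type*} [MeasurableSpace X] (μ : Measure X) (act : G → X → X) :
    Prop :=
  ∀ (r : ℕ) (f : Fin r → X → ℝ), (∀ j, Integrable (f j) μ) → (∀ j x, 0 ≤ f j x) →
    ∀ ε > (0 : ℝ), ∃ g : X → ℝ, Integrable g μ ∧ (∀ x, 0 ≤ g x) ∧
      ∃ (q : ℕ) (s : Fin q → G) (lam : Fin r → Fin q → ℝ), (∀ j k, 0 ≤ lam j k) ∧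
        ∀ j, ∫ x, |f j x - ∑ k, lam j k * g (act (s k) x)| ∂μ ≤ ε

namespace ApproxTransitive

variable {G X : Type*} [MeasurableSpace X] {μ : Measure X} {act : G → X → X}

theorem exists_approx {ι : Type*} [Fintype ι] (h : ApproxTransitive μ act) (f : ι → X → ℝ)
    (hf : ∀ j, Integrable (f j) μ) (hf₀ : ∀ j x, 0 ≤ f j x) {ε : ℝ} (hε : 0 < ε) :
    ∃ g : X → ℝ, Integrable g μ ∧ (∀ x, 0 ≤ g x) ∧
      ∃ (q : ℕ) (s : Fin q → G) (lam : ι → Fin q → ℝ), (∀ j k, 0 ≤ lam j k) ∧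
        ∀ j, ∫ x, |f j x - ∑ k, lam j k * g (act (s k) x)| ∂μ ≤ ε := by
  let e := Fintype.equivFin ι
  obtain ⟨g, hg, hg₀, q, s, lam, hlam, happrox⟩ :=
    h _ (fun j => f (e.symm j)) (fun _ => hf _) (fun _ => hf₀ _) ε hε
  exact ⟨g, hg, hg₀, q, s, fun j => lam (e j), fun _ => hlam _,
    fun j => by simpa using happrox (e j)⟩

theorem of_exists_approx
    (h : ∀ (r : ℕ) (f : Fin r → X → ℝ), (∀ j, Integrable (f j) μ) → (∀ j x, 0 ≤ f j x) →
      ∀ ε > (0 : ℝ), ∃ g : X → ℝ, Integrable g μ ∧ (∀ x, 0 ≤ g x) ∧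
        ∃ (κ : Type) (_ : Fintype κ) (s : κ → G) (lam : Fin r → κ → ℝ),
          (∀ j k, 0 ≤ lam j k) ∧ ∀ j, ∫ x, |f j x - ∑ k, lam j k * g (act (s k) x)| ∂μ ≤ ε) :
    ApproxTransitive μ act := by
  intro r f hf hf₀ ε hε
  obtain ⟨g, hg, hg₀, κ, _, s, lam, hlam, happrox⟩ := h r f hf hf₀ ε hε
  let e := (Fintype.equivFin κ).symm
  refine ⟨g, hg, hg₀, _, fun k => s (e k), fun j k => lam j (e k), fun _ _ => hlam _ _,
    fun j => ?_⟩
  have hsum := fun x => e.sum_comp fun k => lam j k * g (act (s k) x)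
  simpa only [hsum] using happrox j

end ApproxTransitive

theorem MeasureTheory.MeasurePreserving.zpow {Y : Type*} [MeasurableSpace Y] {ν : Measure Y}
    {T : Equiv.Perm Y} (hT : MeasurePreserving T ν ν) (hT' : Measurable T.symm) (n : ℤ) :
    MeasurePreserving ⇑(T ^ n) ν ν := by
  have hTsymm : MeasurePreserving T.symm ν ν :=
    MeasurePreserving.symm (⟨T, hT.measurable, hT'⟩ : Y ≃ᵐ Y) hT
  induction n using Int.induction_on with
  | zero => exact MeasurePreserving.id ν
  | succ k ih => rw [zpow_add_one, Equiv.Perm.coe_mul]; exact ih.comp hT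
  | pred k ih => rw [zpow_sub_one, Equiv.Perm.coe_mul, Equiv.Perm.coe_inv]; exact ih.comp hTsymm

theorem integral_abs_add_le {X : Type*} [MeasurableSpace X] {μ : Measure X} {u w : X → ℝ}
    (hu : Integrable u μ) (hw : Integrable w μ) :
    ∫ x, |u x + w x| ∂μ ≤ ∫ x, |u x| ∂μ + ∫ x, |w x| ∂μ := by
  rw [← integral_add hu.abs hw.abs]
  exact integral_mono_of_nonneg (ae_of_all _ fun _ => abs_nonneg _) (hu.abs.add hw.abs)
    (ae_of_all _ fun x => abs_add_le _ _)

theorem floor_div_mem_Ico_iff {d : ℝ} (hd : 0 < d) (t : ℝ) (m n : ℤ) :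
    ⌊t / d⌋ ∈ Set.Ico m n ↔ t ∈ Set.Ico (m * d) (n * d) := by
  simp only [Set.mem_Ico, Int.le_floor, Int.floor_lt, le_div_iff₀ hd, div_lt_iff₀ hd]

theorem indicator_Ico_floor_div {d : ℝ} (hd : 0 < d) (t : ℝ) (m n : ℤ) :
    (Set.Ico m n).indicator (1 : ℤ → ℝ) ⌊t / d⌋ = (Set.Ico (m * d) (n * d)).indicator 1 t := by
  simp only [Set.indicator_apply, floor_div_mem_Ico_iff hd, Pi.one_apply]

theorem abs_indicator_Ico_sub_le {a a' b b' : ℝ} (ha : a ≤ a') (hb : b ≤ b') (t : ℝ) :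
    |(Set.Ico a b).indicator 1 t - (Set.Ico a' b').indicator 1 t|
      ≤ (Set.Ico a a').indicator (1 : ℝ → ℝ) t + (Set.Ico b b').indicator 1 t := by
  simp only [Set.indicator, Set.mem_Ico, Pi.one_apply]
  split_ifs <;> grind

theorem ceil_div_mul_mem_Ico {d : ℝ} (hd : 0 < d) (a : ℝ) : ⌈a / d⌉ * d ∈ Set.Ico a (a + d) :=
  ⟨(div_le_iff₀ hd).1 (Int.le_ceil _),
    (lt_div_iff₀ hd).1 (by rw [add_div, div_self hd.ne']; exact Int.ceil_lt_add_one _)⟩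

theorem sub_mem_Ico_of_floor_div_eq {d t : ℝ} (hd : 0 < d) {i : ℤ} (ht : ⌊t / d⌋ = i) :
    t - i * d ∈ Set.Ico 0 d := by
  rw [Int.floor_eq_iff, le_div_iff₀ hd, div_lt_iff₀ hd] at ht
  constructor <;> linarith [ht.1, ht.2]

section GridStep

variable {Y : Type*}

noncomputable def gridStep (d : ℝ) (v : ℤ → Y → ℝ) (p : Y × ℝ) : ℝ := v ⌊p.2 / d⌋ p.1

theorem exists_fin_floor_div_eq {c t : ℝ} {N : ℕ} (hN : N ≠ 0) (ht : t ∈ Set.Ico 0 c) :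
    ∃ i : Fin N, ⌊t / (c / N)⌋ = i := by
  have hc : 0 < c := ht.1.trans_lt ht.2
  have hN' : (0 : ℝ) < N := by positivity
  have h₀ : 0 ≤ t / (c / N) := div_nonneg ht.1 (by positivity)
  have hlt : t / (c / N) < N := by
    rw [div_lt_iff₀ (by positivity), mul_div_cancel₀ _ hN'.ne']
    exact ht.2
  exact ⟨⟨⌊t / (c / N)⌋₊, (Nat.floor_lt h₀).2 hlt⟩, (Int.natCast_floor_eq_floor h₀).symm⟩

theorem abs_indicator_prod_Ico_sub_le (S : Set Y) {a a' b b' : ℝ} (ha : a ≤ a') (hb : b ≤ b')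
    (p : Y × ℝ) :
    |(S ×ˢ Set.Ico a b).indicator 1 p - (S ×ˢ Set.Ico a' b').indicator 1 p|
      ≤ (Set.Ico a a').indicator (1 : ℝ → ℝ) p.2 + (Set.Ico b b').indicator 1 p.2 := by
  have hS₀ : 0 ≤ S.indicator (1 : Y → ℝ) p.1 := Set.indicator_nonneg (fun _ _ => zero_le_one) _
  have hS₁ : S.indicator (1 : Y → ℝ) p.1 ≤ 1 := Set.indicator_le_self' (fun _ _ => zero_le_one) _
  rw [Set.indicator_prod_one, Set.indicator_prod_one, ← mul_sub, abs_mul, abs_of_nonneg hS₀]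
  exact (mul_le_of_le_one_left (abs_nonneg _) hS₁).trans (abs_indicator_Ico_sub_le ha hb p.2)

theorem gridStep_indicator_Ico_mul_indicator {d : ℝ} (hd : 0 < d) (S : Set Y) (m n : ℤ) :
    gridStep d (fun k y => (Set.Ico m n).indicator 1 k * S.indicator 1 y) =
      (S ×ˢ Set.Ico (m * d) (n * d)).indicator 1 := by
  ext ⟨y, t⟩
  rw [gridStep, indicator_Ico_floor_div hd, Set.indicator_prod_one, mul_comm]

variable [MeasurableSpace Y]

theorem measurable_gridStep (d : ℝ) {v : ℤ → Y → ℝ} (hv : ∀ k, Measurable (v k)) :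
    Measurable (gridStep d v) :=
  (measurable_from_prod_countable_left (f := fun q : Y × ℤ => v q.2 q.1) hv).comp
    (measurable_fst.prodMk (measurable_snd.div_const d).floor)

theorem ae_snd_mem_Ico (ν : Measure Y) (c : ℝ) :
    ∀ᵐ p ∂(ν.prod (volume.restrict (Set.Ico (0 : ℝ) c))), p.2 ∈ Set.Ico 0 c :=
  Measure.quasiMeasurePreserving_snd.ae (ae_restrict_mem measurableSet_Ico)

-- Asking for every fine enough grid, rather than for some grid, lets finitely many
-- approximations share a grid.
def GridApproximable (ν : Measure Y) (c : ℝ) (f : Y × ℝ → ℝ) : Prop :=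
  Integrable f (ν.prod (volume.restrict (Set.Ico 0 c))) ∧ ∀ δ > (0 : ℝ), ∀ᶠ N : ℕ in atTop,
    ∃ v : ℤ → Y → ℝ, (∀ k, Measurable (v k)) ∧ (∀ k, Integrable (v k) ν) ∧
      ∫ p, |f p - gridStep (c / N) v p| ∂(ν.prod (volume.restrict (Set.Ico 0 c))) ≤ δ

variable {ν : Measure Y} {c : ℝ} {f g : Y × ℝ → ℝ}

theorem integrable_gridStep [IsFiniteMeasure ν] {N : ℕ} (hN : N ≠ 0) {v : ℤ → Y → ℝ}
    (hvm : ∀ k, Measurable (v k)) (hvi : ∀ k, Integrable (v k) ν) :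
    Integrable (gridStep (c / N) v) (ν.prod (volume.restrict (Set.Ico 0 c))) := by
  refine Integrable.mono'
    (integrable_finsetSum (univ : Finset (Fin N)) fun i _ => (hvi i).abs.comp_fst _)
    (measurable_gridStep _ hvm).aestronglyMeasurable ?_
  filter_upwards [ae_snd_mem_Ico ν c] with p hp
  obtain ⟨i, hi⟩ := exists_fin_floor_div_eq hN hp
  rw [gridStep, hi, Real.norm_eq_abs]
  exact single_le_sum (f := fun i : Fin N => |v i p.1|) (fun _ _ => abs_nonneg _) (mem_univ i)

namespace GridApproximable

theorem zero : GridApproximable ν c 0 :=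
  ⟨integrable_zero _ _ _, fun _ hδ => Eventually.of_forall fun _ =>
    ⟨0, fun _ => measurable_const, fun _ => integrable_zero _ _ _, by simpa [gridStep] using hδ.le⟩⟩

theorem add [IsFiniteMeasure ν] (hf : GridApproximable ν c f) (hg : GridApproximable ν c g) :
    GridApproximable ν c (f + g) := by
  refine ⟨hf.1.add hg.1, fun δ hδ => ?_⟩
  filter_upwards [hf.2 _ (half_pos hδ), hg.2 _ (half_pos hδ), eventually_ne_atTop 0]
    with N ⟨v, hvm, hvi, hv⟩ ⟨w, hwm, hwi, hw⟩ hN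
  refine ⟨v + w, fun k => (hvm k).add (hwm k), fun k => (hvi k).add (hwi k), ?_⟩
  have := integral_abs_add_le (hf.1.sub (integrable_gridStep hN hvm hvi))
    (hg.1.sub (integrable_gridStep hN hwm hwi))
  simp only [Pi.sub_apply, sub_add_sub_comm] at this
  simp only [gridStep, Pi.add_apply] at this hv hw ⊢
  linarith

theorem const_mul (hf : GridApproximable ν c f) (a : ℝ) :
    GridApproximable ν c fun p => a * f p := by
  refine ⟨hf.1.const_mul a, fun δ hδ => ?_⟩
  filter_upwards [hf.2 (δ / (|a| + 1)) (by positivity)] with N ⟨v, hvm, hvi, hv⟩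
  refine ⟨a • v, fun k => (hvm k).const_mul a, fun k => (hvi k).const_mul a, ?_⟩
  have habs : ∀ p, |a * f p - gridStep (c / N) (a • v) p| = |a| * |f p - gridStep (c / N) v p| :=
    fun p => by rw [← abs_mul, mul_sub]; rfl
  simp_rw [habs, integral_const_mul]
  calc |a| * ∫ p, |f p - gridStep (c / N) v p| ∂(ν.prod (volume.restrict (Set.Ico 0 c)))
      ≤ |a| * (δ / (|a| + 1)) := by gcongr
    _ ≤ δ := by
      rw [mul_div_assoc', div_le_iff₀ (by positivity)]
      nlinarith [abs_nonneg a]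

theorem one_sub [IsFiniteMeasure ν] (hf : GridApproximable ν c f) :
    GridApproximable ν c (1 - f) :=
  ⟨(integrable_const 1).sub hf.1, fun δ hδ => (hf.2 δ hδ).mono fun _ ⟨v, hvm, hvi, hv⟩ =>
    ⟨1 - v, fun k => measurable_const.sub (hvm k), fun k => (integrable_const 1).sub (hvi k),
      by simpa [gridStep, abs_sub_comm] using hv⟩⟩

theorem of_forall_approx [IsFiniteMeasure ν]
    (hf : Integrable f (ν.prod (volume.restrict (Set.Ico 0 c))))
    (h : ∀ δ > (0 : ℝ), ∃ g, GridApproximable ν c g ∧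
      ∫ p, |f p - g p| ∂(ν.prod (volume.restrict (Set.Ico 0 c))) ≤ δ) :
    GridApproximable ν c f := by
  refine ⟨hf, fun δ hδ => ?_⟩
  obtain ⟨g, hg, hfg⟩ := h _ (half_pos hδ)
  filter_upwards [hg.2 _ (half_pos hδ), eventually_ne_atTop 0] with N ⟨v, hvm, hvi, hv⟩ hN
  refine ⟨v, hvm, hvi, ?_⟩
  have := integral_abs_add_le (hf.sub hg.1) (hg.1.sub (integrable_gridStep hN hvm hvi))
  simp only [Pi.sub_apply, sub_add_sub_cancel] at this
  linarith

theorem sum [IsFiniteMeasure ν] {ι : Type*} (s : Finset ι) {f : ι → Y × ℝ → ℝ}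
    (h : ∀ i ∈ s, GridApproximable ν c (f i)) : GridApproximable ν c (∑ i ∈ s, f i) := by
  classical
  induction s using Finset.induction_on with
  | empty => simpa using zero
  | insert i s hi ih =>
    rw [sum_insert hi]
    exact (h i (mem_insert_self i s)).add (ih fun j hj => h j (mem_insert_of_mem hj))

theorem indicator_iUnion [IsFiniteMeasure ν] {A : ℕ → Set (Y × ℝ)}
    (hdisj : Pairwise (Function.onFun Disjoint A)) (hA : ∀ n, MeasurableSet (A n))
    (happrox : ∀ n, GridApproximable ν c ((A n).indicator 1)) :
    GridApproximable ν c ((⋃ n, A n).indicator 1) := by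
  refine of_forall_approx ((integrable_const 1).indicator (.iUnion hA)) fun δ hδ => ?_
  obtain ⟨M, hM⟩ := ((tendsto_measure_biUnion_Ici_zero_of_pairwise_disjoint
    (μ := ν.prod (volume.restrict (Set.Ico 0 c))) (fun n => (hA n).nullMeasurableSet)
      hdisj).eventually (eventually_le_nhds (ENNReal.ofReal_pos.2 hδ))).exists
  refine ⟨∑ n ∈ range M, (A n).indicator 1, .sum _ fun n _ => happrox n, ?_⟩
  have hsplit : (⋃ n, A n) = (⋃ n ∈ range M, A n) ∪ ⋃ n ≥ M, A n := by
    ext p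
    simp only [Set.mem_iUnion, Set.mem_union, mem_range, exists_prop]
    constructor
    · rintro ⟨n, hn⟩
      exact (lt_or_ge n M).imp (fun h => ⟨n, h, hn⟩) fun h => ⟨n, h, hn⟩
    · rintro (⟨n, -, hn⟩ | ⟨n, -, hn⟩) <;> exact ⟨n, hn⟩
  have hdisj' : Disjoint (⋃ n ∈ range M, A n) (⋃ n ≥ M, A n) := by
    simp only [Set.disjoint_iUnion_left, Set.disjoint_iUnion_right, mem_range]
    exact fun n hn m hm => hdisj (by omega)
  have hdiff : ∀ p, (⋃ n, A n).indicator 1 p - (∑ n ∈ range M, (A n).indicator 1) p =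
      (⋃ n ≥ M, A n).indicator (1 : Y × ℝ → ℝ) p := by
    intro p
    rw [hsplit, Set.indicator_union_of_disjoint hdisj', Finset.sum_apply,
      ← Finset.indicator_biUnion_apply _ _ (fun m _ n _ h => hdisj h)]
    ring
  have habs : ∀ p, |(⋃ n ≥ M, A n).indicator (1 : Y × ℝ → ℝ) p| = (⋃ n ≥ M, A n).indicator 1 p :=
    fun p => abs_of_nonneg (Set.indicator_nonneg (fun _ _ => zero_le_one) p)
  simp only [hdiff, habs]
  rw [integral_indicator_one (.iUnion fun n => .iUnion fun _ => hA n)]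
  exact ENNReal.toReal_le_of_le_ofReal hδ.le hM

end GridApproximable

theorem integral_indicator_Ico_snd_le [IsFiniteMeasure ν] {x y : ℝ} (hxy : x ≤ y) :
    ∫ p, (Set.Ico x y).indicator 1 p.2 ∂(ν.prod (volume.restrict (Set.Ico 0 c)))
      ≤ ν.real Set.univ * (y - x) := by
  rw [integral_fun_snd, smul_eq_mul, integral_indicator_one measurableSet_Ico,
    measureReal_restrict_apply measurableSet_Ico, ← Real.volume_real_Ico_of_le hxy]
  gcongr
  exacts [measure_Ico_lt_top.ne, Set.inter_subset_left]

theorem gridApproximable_indicator_prod_Ico [IsFiniteMeasure ν] (hc : 0 < c) {S : Set Y}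
    (hS : MeasurableSet S) (a b : ℝ) : GridApproximable ν c ((S ×ˢ Set.Ico a b).indicator 1) := by
  refine ⟨(integrable_const 1).indicator (hS.prod measurableSet_Ico), fun δ hδ => ?_⟩
  have hsmall : ∀ᶠ N : ℕ in atTop, ν.real Set.univ * (2 * c) / N ≤ δ :=
    (tendsto_const_div_atTop_nhds_zero_nat _).eventually (eventually_le_nhds hδ)
  filter_upwards [hsmall, eventually_gt_atTop 0] with N hNδ hN
  have hd : 0 < c / N := by positivity
  obtain ⟨ha, ha'⟩ := ceil_div_mul_mem_Ico hd a
  obtain ⟨hb, hb'⟩ := ceil_div_mul_mem_Ico hd b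
  refine ⟨fun k y => (Set.Ico ⌈a / (c / N)⌉ ⌈b / (c / N)⌉).indicator 1 k * S.indicator 1 y,
    fun k => (measurable_one.indicator hS).const_mul _,
    fun k => ((integrable_const 1).indicator hS).const_mul _, ?_⟩
  have hint : ∀ x y : ℝ, Integrable (fun p : Y × ℝ => (Set.Ico x y).indicator (1 : ℝ → ℝ) p.2)
      (ν.prod (volume.restrict (Set.Ico 0 c))) := fun x y =>
    ((integrable_const (1 : ℝ)).indicator measurableSet_Ico).comp_snd ν
  rw [gridStep_indicator_Ico_mul_indicator hd]
  refine (integral_mono_of_nonneg (ae_of_all _ fun _ => abs_nonneg _)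
    ((hint _ _).add (hint _ _)) (ae_of_all _ (abs_indicator_prod_Ico_sub_le S ha hb))).trans ?_
  rw [integral_add' (hint _ _) (hint _ _)]
  calc _ ≤ ν.real Set.univ * (⌈a / (c / N)⌉ * (c / N) - a) +
        ν.real Set.univ * (⌈b / (c / N)⌉ * (c / N) - b) :=
        add_le_add (integral_indicator_Ico_snd_le ha) (integral_indicator_Ico_snd_le hb)
    _ ≤ ν.real Set.univ * (2 * c) / N := by
      rw [← mul_add, mul_div_assoc, mul_div_assoc]
      gcongr
      linarith
    _ ≤ δ := hNδ

theorem gridApproximable_indicator_prod_univ [IsFiniteMeasure ν] {S : Set Y}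
    (hS : MeasurableSet S) : GridApproximable ν c ((S ×ˢ Set.univ).indicator 1) :=
  ⟨(integrable_const 1).indicator (hS.prod MeasurableSet.univ), fun _ hδ =>
    Eventually.of_forall fun _ => ⟨fun _ => S.indicator 1, fun _ => measurable_one.indicator hS,
      fun _ => (integrable_const 1).indicator hS, by
        have h : ∀ p : Y × ℝ, (S ×ˢ Set.univ).indicator 1 p = S.indicator (1 : Y → ℝ) p.1 :=
          fun _ => by rw [Set.indicator_prod_one, Set.indicator_univ, Pi.one_apply, mul_one]
        simpa [gridStep, h] using hδ.le⟩⟩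
theorem gridApproximable_indicator [IsFiniteMeasure ν] (hc : 0 < c) {A : Set (Y × ℝ)}
    (hA : MeasurableSet A) : GridApproximable ν c (A.indicator 1) := by
  -- Adding `univ` to the intervals makes the generating family countably spanning.
  let D : Set (Set ℝ) := insert Set.univ {I | ∃ a b : ℝ, a < b ∧ Set.Ico a b = I}
  have hD : MeasurableSpace.generateFrom D = borel ℝ := by
    rw [MeasurableSpace.generateFrom_insert_univ, borel_eq_generateFrom_Ico]
  have hDspan : IsCountablySpanning D :=
    ⟨fun _ => Set.univ, fun _ => Set.mem_insert _ _, Set.iUnion_const _⟩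
  have hgen := generateFrom_eq_prod (α := Y) MeasurableSpace.generateFrom_measurableSet
    (hD.trans BorelSpace.measurable_eq.symm) isCountablySpanning_measurableSet hDspan
  induction A, hA using MeasurableSpace.induction_on_inter hgen.symm
    (MeasurableSpace.isPiSystem_measurableSet.prod (isPiSystem_Ico id id).insert_univ) with
  | empty => rw [Set.indicator_empty]; exact .zero
  | basic t ht =>
    obtain ⟨S, hS, I, hI, rfl⟩ := ht
    rcases hI with rfl | ⟨a, b, -, rfl⟩
    · exact gridApproximable_indicator_prod_univ hS
    · exact gridApproximable_indicator_prod_Ico hc hS a b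
  | compl t _ ht => simpa only [Set.indicator_compl] using ht.one_sub
  | iUnion A hdisj hA happrox => exact .indicator_iUnion hdisj hA happrox

theorem gridApproximable_simpleFunc [IsFiniteMeasure ν] (hc : 0 < c) (s : SimpleFunc (Y × ℝ) ℝ) :
    GridApproximable ν c s := by
  induction s using SimpleFunc.induction with
  | @const k A hA =>
    have h : ⇑(SimpleFunc.piecewise A hA (.const _ k) (.const _ 0)) =
        fun p => k * A.indicator 1 p := by
      ext p
      by_cases hp : p ∈ A <;> simp [hp]
    rw [h]
    exact (gridApproximable_indicator hc hA).const_mul k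
  | add _ hf hg => exact hf.add hg

theorem gridApproximable_of_integrable [IsFiniteMeasure ν] (hc : 0 < c) {f : Y × ℝ → ℝ}
    (hf : Integrable f (ν.prod (volume.restrict (Set.Ico 0 c)))) : GridApproximable ν c f := by
  refine .of_forall_approx hf fun δ hδ => ?_
  obtain ⟨s, hs, -⟩ := (memLp_one_iff_integrable.2 hf).exists_simpleFunc_eLpNorm_sub_lt
    ENNReal.one_ne_top (ENNReal.ofReal_pos.2 hδ).ne'
  refine ⟨s, gridApproximable_simpleFunc hc s, ?_⟩
  have h := integral_norm_eq_lintegral_enorm (hf.1.sub s.aestronglyMeasurable)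
  rw [← eLpNorm_one_eq_lintegral_enorm] at h
  simp only [Pi.sub_apply, Real.norm_eq_abs] at h
  rw [h]
  exact ENNReal.toReal_le_of_le_ofReal hδ.le hs.le

theorem exists_nonneg_gridStep_approx [IsFiniteMeasure ν] (hc : 0 < c) {r : ℕ}
    {f : Fin r → Y × ℝ → ℝ} (hf : ∀ j, Integrable (f j) (ν.prod (volume.restrict (Set.Ico 0 c))))
    (hf₀ : ∀ j p, 0 ≤ f j p) {δ : ℝ} (hδ : 0 < δ) :
    ∃ N : ℕ, N ≠ 0 ∧ ∃ V : Fin r → ℤ → Y → ℝ, (∀ j k, Measurable (V j k)) ∧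
      (∀ j k, Integrable (V j k) ν) ∧ (∀ j k y, 0 ≤ V j k y) ∧
      ∀ j, ∫ p, |f j p - gridStep (c / N) (V j) p|
        ∂(ν.prod (volume.restrict (Set.Ico 0 c))) ≤ δ := by
  obtain ⟨N, hV, hN⟩ := ((eventually_all.2 fun j =>
    (gridApproximable_of_integrable hc (hf j)).2 δ hδ).and (eventually_ne_atTop 0)).exists
  choose V hVm hVi hV using hV
  refine ⟨N, hN, fun j k y => max (V j k y) 0, fun j k => (hVm j k).max measurable_const,
    fun j k => (hVi j k).pos_part, fun j k y => le_max_right _ _, fun j => le_trans ?_ (hV j)⟩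
  -- Truncating at `0` only brings the step function closer to the nonnegative `f j`.
  refine integral_mono_of_nonneg (ae_of_all _ fun _ => abs_nonneg _)
    ((hf j).sub (integrable_gridStep hN (hVm j) (hVi j))).abs (ae_of_all _ fun p => ?_)
  simpa only [gridStep, max_eq_left (hf₀ j p)] using
    abs_max_sub_max_le_abs (f j p) (gridStep (c / N) (V j) p) 0

end GridStep

section ConstFlow

variable {Y : Type*} (T : Equiv.Perm Y) {c : ℝ}

theorem constFlow_eq_of_add_eq {s t x : ℝ} {m : ℤ} (hx : x ∈ Set.Ico 0 c)
    (h : t + s = m * c + x) (y : Y) : constFlow T c s (y, t) = ((T ^ m) y, x) := by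
  have hc : 0 < c := hx.1.trans_lt hx.2
  have hm : ⌊(t + s) / c⌋ = m := by
    rw [Int.floor_eq_iff, h, le_div_iff₀ hc, div_lt_iff₀ hc]
    constructor <;> linarith [hx.1, hx.2]
  simp only [constFlow, hm]
  rw [h, add_sub_cancel_left]

theorem constFlow_shift_of_floor_eq {N i : ℕ} (hi : i < N) {t : ℝ} (hc : 0 < c)
    (ht : ⌊t / (c / N)⌋ = i) (n : ℤ) (y : Y) :
    constFlow T c (n * c - i * (c / N)) (y, t) = ((T ^ n) y, t - i * (c / N)) := by
  have hN : (0 : ℝ) < N := by exact_mod_cast (Nat.zero_le i).trans_lt hi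
  have hd : 0 < c / N := div_pos hc hN
  have hdc : c / N ≤ c := div_le_self hc.le (by exact_mod_cast (Nat.zero_le i).trans_lt hi)
  have hx := sub_mem_Ico_of_floor_div_eq hd ht
  push_cast at hx
  exact constFlow_eq_of_add_eq T ⟨hx.1, hx.2.trans_le hdc⟩ (by ring) y

theorem le_constFlow_shift_snd {N i : ℕ} (hi : i < N) {t : ℝ} (ht : t ∈ Set.Ico 0 c)
    (hne : ⌊t / (c / N)⌋ ≠ i) (n : ℤ) (y : Y) :
    c / N ≤ (constFlow T c (n * c - i * (c / N)) (y, t)).2 := by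
  have hc : 0 < c := ht.1.trans_lt ht.2
  have hN : (0 : ℝ) < N := by exact_mod_cast (Nat.zero_le i).trans_lt hi
  have hd : 0 < c / N := div_pos hc hN
  have hiN : (i : ℝ) + 1 ≤ N := by exact_mod_cast hi
  have hNd : (N : ℝ) * (c / N) = c := mul_div_cancel₀ _ hN.ne'
  obtain ⟨ht₀, htc⟩ := ht
  rcases hne.lt_or_gt with hlt | hgt
  · rw [Int.floor_lt, div_lt_iff₀ hd] at hlt
    push_cast at hlt
    rw [constFlow_eq_of_add_eq T (m := n - 1) (x := t - i * (c / N) + c)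
      ⟨by nlinarith, by linarith⟩ (by push_cast; ring) y]
    nlinarith
  · rw [← Int.add_one_le_iff, Int.le_floor, le_div_iff₀ hd] at hgt
    push_cast at hgt
    rw [constFlow_eq_of_add_eq T (m := n) (x := t - i * (c / N))
      ⟨by nlinarith, by nlinarith⟩ (by ring) y]
    nlinarith

noncomputable def firstCellLift (d : ℝ) (g : Y → ℝ) (p : Y × ℝ) : ℝ :=
  g p.1 * (Set.Ico 0 d).indicator 1 p.2

theorem firstCellLift_constFlow_shift (g : Y → ℝ) {N : ℕ} {i i₀ : Fin N} {t : ℝ}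
    (ht : t ∈ Set.Ico 0 c) (ht₀ : ⌊t / (c / N)⌋ = i₀) (n : ℤ) (y : Y) :
    firstCellLift (c / N) g (constFlow T c (n * c - (i : ℕ) * (c / N)) (y, t)) =
      if i = i₀ then g ((T ^ n) y) else 0 := by
  have hc : 0 < c := ht.1.trans_lt ht.2
  split_ifs with hii
  · subst hii
    have hd : 0 < c / N := div_pos hc (by exact_mod_cast (Nat.zero_le _).trans_lt i.isLt)
    rw [firstCellLift, constFlow_shift_of_floor_eq T i.isLt hc ht₀,
      Set.indicator_of_mem (by exact_mod_cast sub_mem_Ico_of_floor_div_eq hd ht₀), Pi.one_apply,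
      mul_one]
  · have hne : ⌊t / (c / N)⌋ ≠ (i : ℕ) := by
      rw [ht₀, Ne, Nat.cast_inj, Fin.val_inj]
      exact Ne.symm hii
    rw [firstCellLift, Set.indicator_of_notMem
      (fun h => (le_constFlow_shift_snd T i.isLt ht hne n y).not_gt h.2), mul_zero]

theorem sum_firstCellLift_constFlow_shift {N q : ℕ} (lam : Fin N → Fin q → ℝ) (n : Fin q → ℤ)
    (g : Y → ℝ) {t : ℝ} (ht : t ∈ Set.Ico 0 c) {i₀ : Fin N} (ht₀ : ⌊t / (c / N)⌋ = i₀) (y : Y) :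
    ∑ ik : Fin N × Fin q, lam ik.1 ik.2 *
      firstCellLift (c / N) g (constFlow T c (n ik.2 * c - (ik.1 : ℕ) * (c / N)) (y, t)) =
      ∑ k, lam i₀ k * g ((T ^ n k) y) := by
  simp [Fintype.sum_prod_type, firstCellLift_constFlow_shift T g ht ht₀]

theorem abs_sub_sum_firstCellLift_le {N q : ℕ} (hN : N ≠ 0) (V : ℤ → Y → ℝ)
    (lam : Fin N → Fin q → ℝ) (n : Fin q → ℤ) (g : Y → ℝ) {t : ℝ} (ht : t ∈ Set.Ico 0 c)
    (a : ℝ) (y : Y) :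
    |a - ∑ ik : Fin N × Fin q, lam ik.1 ik.2 *
        firstCellLift (c / N) g (constFlow T c (n ik.2 * c - (ik.1 : ℕ) * (c / N)) (y, t))| ≤
      |a - gridStep (c / N) V (y, t)| + ∑ i : Fin N, |V i y - ∑ k, lam i k * g ((T ^ n k) y)| := by
  obtain ⟨i₀, hi₀⟩ := exists_fin_floor_div_eq hN ht
  rw [sum_firstCellLift_constFlow_shift T lam n g ht hi₀, gridStep, hi₀]
  calc _ ≤ |a - V i₀ y| + |V i₀ y - ∑ k, lam i₀ k * g ((T ^ n k) y)| := abs_sub_le _ _ _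
    _ ≤ _ := add_le_add_right (single_le_sum
        (f := fun i : Fin N => |V i y - ∑ k, lam i k * g ((T ^ n k) y)|)
        (fun _ _ => abs_nonneg _) (mem_univ i₀)) _

end ConstFlow

section

variable {Y : Type*} [MeasurableSpace Y] {ν : Measure Y} {c : ℝ}

theorem integral_add_sum_comp_fst [IsFiniteMeasure ν] {ι : Type*} {s : Finset ι} (hc : 0 ≤ c)
    {h : Y × ℝ → ℝ} {w : ι → Y → ℝ} (hh : Integrable h (ν.prod (volume.restrict (Set.Ico 0 c))))
    (hw : ∀ i, Integrable (w i) ν) :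
    ∫ p, (h p + ∑ i ∈ s, w i p.1) ∂(ν.prod (volume.restrict (Set.Ico 0 c))) =
      ∫ p, h p ∂(ν.prod (volume.restrict (Set.Ico 0 c))) + c * ∑ i ∈ s, ∫ y, w i y ∂ν := by
  rw [integral_add hh (integrable_finsetSum _ fun i _ => (hw i).comp_fst _),
    integral_fun_fst (fun y => ∑ i ∈ s, w i y), integral_finsetSum _ fun i _ => hw i,
    measureReal_restrict_apply_univ, Real.volume_real_Ico_of_le hc, sub_zero, smul_eq_mul]

theorem approxTransitive_constFlow [IsFiniteMeasure ν] {T : Equiv.Perm Y}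
    (hT : MeasurePreserving T ν ν) (hT' : Measurable T.symm)
    (hAT : ApproxTransitive ν fun n : ℤ => ⇑(T ^ n)) (hc : 0 < c) :
    ApproxTransitive (ν.prod (volume.restrict (Set.Ico 0 c))) (constFlow T c) := by
  refine .of_exists_approx fun r f hf hf₀ ε hε => ?_
  obtain ⟨N, hN, V, hVm, hVi, hV₀, hfV⟩ := exists_nonneg_gridStep_approx hc hf hf₀ (half_pos hε)
  have hN' : (0 : ℝ) < N := by positivity
  obtain ⟨g, hg, hg₀, q, n, lam, hlam, hW⟩ :=
    hAT.exists_approx (fun ji : Fin r × Fin N => V ji.1 ji.2) (fun _ => hVi _ _)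
      (fun _ => hV₀ _ _) (ε := ε / (2 * (c * N))) (by positivity)
  refine ⟨firstCellLift (c / N) g, hg.mul_prod ((integrable_const 1).indicator measurableSet_Ico),
    fun p => mul_nonneg (hg₀ _) (Set.indicator_nonneg (fun _ _ => zero_le_one) _), Fin N × Fin q,
    inferInstance, fun ik => n ik.2 * c - (ik.1 : ℕ) * (c / N), fun j ik => lam (j, ik.1) ik.2,
    fun _ _ => hlam _ _, fun j => ?_⟩
  set W : Fin N → Y → ℝ := fun i y => ∑ k, lam (j, i) k * g ((T ^ n k) y)
  have hWi : ∀ i, Integrable (W i) ν := fun i => integrable_finsetSum _ fun k _ =>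
    ((hT.zpow hT' (n k)).integrable_comp_of_integrable hg).const_mul _
  have hfVi : Integrable (fun p => |f j p - gridStep (c / N) (V j) p|)
      (ν.prod (volume.restrict (Set.Ico 0 c))) :=
    ((hf j).sub (integrable_gridStep hN (hVm j) (hVi j))).abs
  calc _ ≤ ∫ p, (|f j p - gridStep (c / N) (V j) p| + ∑ i : Fin N, |V j i p.1 - W i p.1|)
        ∂(ν.prod (volume.restrict (Set.Ico 0 c))) :=
        integral_mono_of_nonneg (ae_of_all _ fun _ => abs_nonneg _)
          (hfVi.add (integrable_finsetSum _ fun (i : Fin N) _ =>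
            ((hVi j i).sub (hWi i)).abs.comp_fst _))
          ((ae_snd_mem_Ico ν c).mono fun ⟨y, t⟩ ht =>
            abs_sub_sum_firstCellLift_le T hN (V j) (fun i k => lam (j, i) k) n g ht _ y)
    _ = ∫ p, |f j p - gridStep (c / N) (V j) p| ∂(ν.prod (volume.restrict (Set.Ico 0 c))) +
        c * ∑ i : Fin N, ∫ y, |V j i y - W i y| ∂ν :=
      integral_add_sum_comp_fst hc.le hfVi fun (i : Fin N) => ((hVi j i).sub (hWi i)).abs
    _ ≤ ε / 2 + c * ∑ _i : Fin N, ε / (2 * (c * N)) := by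
      gcongr with i
      exacts [hfV j, hW (j, i)]
    _ = ε := by
      rw [sum_const, card_univ, Fintype.card_fin, nsmul_eq_mul]
      field_simp
      ring

end

theorem constFlow_of_AT_base_is_AT_general
    {Y : Type*} [MeasurableSpace Y] (ν : Measure Y) [IsProbabilityMeasure ν]
    (T : Equiv.Perm Y) (hTinvmeas : Measurable T.symm)
    (hmp : MeasurePreserving T ν ν)
    -- T is approximately transitive
    (hAT : ∀ (r : ℕ) (f : Fin r → Y → ℝ),
      (∀ j, Integrable (f j) ν) → (∀ j y, 0 ≤ f j y) →
      ∀ ε > (0 : ℝ),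
      ∃ (g : Y → ℝ), Integrable g ν ∧ (∀ y, 0 ≤ g y) ∧
      ∃ (q : ℕ) (nk : Fin q → ℤ) (lam : Fin r → Fin q → ℝ),
        (∀ j t, 0 ≤ lam j t) ∧
        ∀ j, ∫ y, |f j y - ∑ t, lam j t * g ((T ^ (nk t)) y)| ∂ν ≤ ε)
    (c : ℝ) (hc : 0 < c) :
    -- the flow built under the constant function c with base T is approximately
    -- transitive as an ℝ-action on (Y × [0,c), ν × Lebesgue)
    ∀ (r : ℕ) (f : Fin r → Y × ℝ → ℝ),
      (∀ j, Integrable (f j) (ν.prod (volume.restrict (Set.Ico (0 : ℝ) c)))) →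
      (∀ j p, 0 ≤ f j p) →
      ∀ ε > (0 : ℝ),
      ∃ (g : Y × ℝ → ℝ), Integrable g (ν.prod (volume.restrict (Set.Ico (0 : ℝ) c))) ∧
        (∀ p, 0 ≤ g p) ∧
      ∃ (q : ℕ) (sk : Fin q → ℝ) (lam : Fin r → Fin q → ℝ),
        (∀ j t, 0 ≤ lam j t) ∧
        ∀ j, ∫ p, |f j p - ∑ t, lam j t * g (constFlow T c (sk t) p)|
              ∂(ν.prod (volume.restrict (Set.Ico (0 : ℝ) c))) ≤ ε :=
  approxTransitive_constFlow hmp hTinvmeas hAT hc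

theorem constFlow_of_AT_base_is_AT
    {Y : Type*} [MeasurableSpace Y] (ν : Measure Y) [IsProbabilityMeasure ν]
    (T : Equiv.Perm Y) (hTmeas : Measurable T) (hTinvmeas : Measurable T.symm)
    (hmp : MeasurePreserving T ν ν) (herg : Ergodic T ν)
    -- T is approximately transitive
    (hAT : ∀ (r : ℕ) (f : Fin r → Y → ℝ),
      (∀ j, Integrable (f j) ν) → (∀ j y, 0 ≤ f j y) →
      ∀ ε > (0 : ℝ),
      ∃ (g : Y → ℝ), Integrable g ν ∧ (∀ y, 0 ≤ g y) ∧
      ∃ (q : ℕ) (nk : Fin q → ℤ) (lam : Fin r → Fin q → ℝ),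
        (∀ j t, 0 ≤ lam j t) ∧
        ∀ j, ∫ y, |f j y - ∑ t, lam j t * g ((T ^ (nk t)) y)| ∂ν ≤ ε)
    (c : ℝ) (hc : 0 < c) :
    -- the flow built under the constant function c with base T is approximately
    -- transitive as an ℝ-action on (Y × [0,c), ν × Lebesgue)
    ∀ (r : ℕ) (f : Fin r → Y × ℝ → ℝ),
      (∀ j, Integrable (f j) (ν.prod (volume.restrict (Set.Ico (0 : ℝ) c)))) →
      (∀ j p, 0 ≤ f j p) →
      ∀ ε > (0 : ℝ),
      ∃ (g : Y × ℝ → ℝ), Integrable g (ν.prod (volume.restrict (Set.Ico (0 : ℝ) c))) ∧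
        (∀ p, 0 ≤ g p) ∧
      ∃ (q : ℕ) (sk : Fin q → ℝ) (lam : Fin r → Fin q → ℝ),
        (∀ j t, 0 ≤ lam j t) ∧
        ∀ j, ∫ p, |f j p - ∑ t, lam j t * g (constFlow T c (sk t) p)|
              ∂(ν.prod (volume.restrict (Set.Ico (0 : ℝ) c))) ≤ ε :=
  constFlow_of_AT_base_is_AT_general ν T hTinvmeas hmp hAT c hc
end
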